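/- arXiv:2407.19312 — 6 statements merged into one kernel-verified Lean document; each statement's English description precedes it below -/
import Mathlib

section
/- For every real β > 0 and every positive integer j, the series ∑_{k=1}^∞ 1/(k^β · (1+|k−j|)) converges and ∑_{k=1}^∞ 1/(k^β · (1+|k−j|)) < 2 + 2/β. -/
/-!
Split the terms according to whether `2k ≤ j + 1`. For those `k` the factor `1 + |k - j|` is at
least `(j + 1) / 2`, so each term is at most `2 / (j + 1)`, and there are at most `(j + 1) / 2`
of them. For the other `k` we have `1 + |k - j| ≤ k`, so the term is at most
`(1 + |k - j|) ^ (-(1 + β))`; since `k ↦ k - j` is injective, these add up to at most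
`∑_{d ∈ ℤ} (1 + |d|) ^ (-(1 + β)) = 1 + 2 ∑_{n ≥ 1} (1 + n) ^ (-(1 + β))`. By the mean value
theorem, `β (n + 1) ^ (-(1 + β)) < n ^ (-β) - (n + 1) ^ (-β)`, and the right-hand side telescopes
to `1`, so the last sum is less than `1 / β`.
-/

open Filter Topology

theorem Antitone.hasSum_sub_succ {f : ℕ → ℝ} {l : ℝ} (hf : Antitone f)
    (hl : Tendsto f atTop (𝓝 l)) : HasSum (fun n ↦ f n - f (n + 1)) (f 0 - l) := by
  refine (hasSum_iff_tendsto_nat_of_nonneg (fun n ↦ sub_nonneg.2 (hf n.le_succ)) _).2 ?_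
  simp_rw [Finset.sum_range_sub']
  exact tendsto_const_nhds.sub hl

theorem mul_rpow_neg_one_add_lt_sub_rpow_neg {β x : ℝ} (hβ : 0 < β) (hx : 0 < x) :
    β * (x + 1) ^ (-(1 + β)) < x ^ (-β) - (x + 1) ^ (-β) := by
  obtain ⟨c, ⟨hxc, hcx⟩, hc⟩ := exists_hasDerivAt_eq_slope (fun t ↦ t ^ (-β))
    (fun t ↦ -β * t ^ (-β - 1)) (lt_add_one x)
    (fun t ht ↦
      (Real.continuousAt_rpow_const _ _ (Or.inl (hx.trans_le ht.1).ne')).continuousWithinAt)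
    (fun t ht ↦ Real.hasDerivAt_rpow_const (Or.inl (hx.trans ht.1).ne'))
  have hmono : (x + 1) ^ (-(1 + β)) < c ^ (-(1 + β)) :=
    Real.rpow_lt_rpow_of_neg (hx.trans hxc) hcx (by linarith)
  rw [add_sub_cancel_left, div_one, show -β - 1 = -(1 + β) by ring] at hc
  nlinarith

theorem summable_one_add_abs_int_rpow_neg {s : ℝ} (hs : 1 < s) :
    Summable fun d : ℤ ↦ (1 + |(d : ℝ)|) ^ (-s) := by
  have hnat : Summable fun n : ℕ ↦ (1 + (n : ℝ)) ^ (-s) :=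
    ((Real.summable_one_div_nat_add_rpow 1 s).2 hs).congr fun n ↦ by
      rw [abs_of_nonneg (by positivity), add_comm, one_div, Real.rpow_neg (by positivity)]
  exact summable_int_iff_summable_nat_and_neg.2 ⟨by simpa using hnat, by simpa using hnat⟩

theorem tsum_one_add_pnat_rpow_lt {β : ℝ} (hβ : 0 < β) :
    ∑' k : ℕ+, (1 + (k : ℝ)) ^ (-(1 + β)) < 1 / β := by
  set g : ℕ → ℝ := fun n ↦ ((n : ℝ) + 1) ^ (-β)
  have hg : Antitone g := fun m n hmn ↦
    Real.rpow_le_rpow_of_nonpos (by positivity) (by gcongr) (by linarith)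
  have hlim : Tendsto g atTop (𝓝 0) :=
    (tendsto_rpow_neg_atTop hβ).comp (tendsto_atTop_add_const_right _ 1 tendsto_natCast_atTop_atTop)
  have htel : HasSum (fun n ↦ g n - g (n + 1)) 1 := by
    simpa [g] using hg.hasSum_sub_succ hlim
  have hlt : ∀ n : ℕ, β * (1 + ((n + 1 : ℕ) : ℝ)) ^ (-(1 + β)) < g n - g (n + 1) := fun n ↦ by
    have := mul_rpow_neg_one_add_lt_sub_rpow_neg hβ (by positivity : (0 : ℝ) < n + 1)
    simpa [g, add_comm, add_left_comm] using this
  have hsum : Summable fun n : ℕ ↦ β * (1 + ((n + 1 : ℕ) : ℝ)) ^ (-(1 + β)) :=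
    htel.summable.of_nonneg_of_le (fun n ↦ by positivity) fun n ↦ (hlt n).le
  have hlt_one := hasSum_lt (fun n ↦ (hlt n).le) (hlt 0) hsum.hasSum htel
  rw [tsum_mul_left] at hlt_one
  rw [tsum_pnat_eq_tsum_succ (f := fun n : ℕ ↦ (1 + (n : ℝ)) ^ (-(1 + β))), lt_div_iff₀ hβ]
  linarith

theorem tsum_one_add_abs_int_rpow_lt {β : ℝ} (hβ : 0 < β) :
    ∑' d : ℤ, (1 + |(d : ℝ)|) ^ (-(1 + β)) < 1 + 2 / β := by
  rw [tsum_int_eq_zero_add_two_mul_tsum_pnat (fun d ↦ by simp)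
    (summable_one_add_abs_int_rpow_neg (by linarith))]
  have hpnat := tsum_one_add_pnat_rpow_lt hβ
  simp only [Int.cast_zero, abs_zero, add_zero, Real.one_rpow, Int.cast_natCast, Nat.abs_cast,
    nsmul_eq_mul, Nat.cast_ofNat]
  linarith [show 2 / β = 2 * (1 / β) by ring]

theorem hasSum_pnat_ite_two_mul_le (m : ℕ) (c : ℝ) :
    HasSum (fun k : ℕ+ ↦ if 2 * (k : ℕ) ≤ m then c else 0) ((m / 2 : ℕ) * c) := by
  rw [hasSum_pnat_iff_hasSum_succ (f := fun n ↦ if 2 * n ≤ m then c else 0)]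
  have hfin := hasSum_sum_of_ne_finset_zero (f := fun n : ℕ ↦ if 2 * (n + 1) ≤ m then c else 0)
    (s := Finset.range (m / 2)) (L := .unconditional ℕ)
    fun n hn ↦ if_neg (by rw [Finset.mem_range] at hn; omega)
  convert hfin using 1
  rw [Finset.sum_congr rfl fun n hn ↦ if_pos (by rw [Finset.mem_range] at hn; omega)]
  simp

theorem one_div_rpow_mul_le_of_two_mul_le {β k J : ℝ} (hβ : 0 ≤ β) (hk : 1 ≤ k)
    (h : 2 * k ≤ J + 1) : 1 / (k ^ β * (1 + |k - J|)) ≤ 2 / (J + 1) := by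
  have hkβ : 1 ≤ k ^ β := Real.one_le_rpow hk hβ
  have hdist : J + 1 ≤ 2 * (1 + |k - J|) := by linarith [neg_abs_le (k - J)]
  rw [div_le_div_iff₀ (by positivity) (by linarith)]
  nlinarith [abs_nonneg (k - J)]

theorem one_div_rpow_mul_le_rpow_neg {β k d : ℝ} (hβ : 0 ≤ β) (hd : 0 < d) (hdk : d ≤ k) :
    1 / (k ^ β * d) ≤ d ^ (-(1 + β)) := by
  rw [Real.rpow_neg hd.le, Real.rpow_add hd, Real.rpow_one, ← one_div, mul_comm d]
  gcongr

theorem one_div_rpow_mul_one_add_abs_sub_le {β : ℝ} (hβ : 0 ≤ β) {k j : ℕ} (hk : 1 ≤ k)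
    (hj : 1 ≤ j) :
    1 / ((k : ℝ) ^ β * (1 + |(k : ℝ) - j|)) ≤
      (if 2 * k ≤ j + 1 then 2 / ((j : ℝ) + 1) else 0) + (1 + |(k : ℝ) - j|) ^ (-(1 + β)) := by
  have hk' : (1 : ℝ) ≤ k := by exact_mod_cast hk
  have hfar : 0 ≤ (1 + |(k : ℝ) - j|) ^ (-(1 + β)) := by positivity
  split_ifs with h
  · have hnear := one_div_rpow_mul_le_of_two_mul_le hβ hk' (J := j) (by exact_mod_cast h)
    linarith
  · rw [zero_add]
    refine one_div_rpow_mul_le_rpow_neg hβ (by positivity) ?_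
    have hj' : (1 : ℝ) ≤ j := by exact_mod_cast hj
    have h' : (j : ℝ) + 1 < 2 * k := by exact_mod_cast not_le.1 h
    have hdist : |(k : ℝ) - j| ≤ k - 1 := abs_sub_le_iff.2 ⟨by linarith, by linarith⟩
    linarith

/-- For every real `β > 0` and every positive integer `j`, the series
`∑_{k=1}^∞ 1/(k^β · (1+|k−j|))` converges and its sum is strictly less than `2 + 2/β`. -/
theorem sum_one_div_rpow_mul_shift_lt (β : ℝ) (hβ : 0 < β) (j : ℕ+) :
    Summable (fun k : ℕ+ => 1 / ((k : ℝ) ^ β * (1 + |(k : ℝ) - (j : ℝ)|))) ∧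
      ∑' k : ℕ+, 1 / ((k : ℝ) ^ β * (1 + |(k : ℝ) - (j : ℝ)|)) < 2 + 2 / β := by
  set near := fun k : ℕ+ ↦ if 2 * (k : ℕ) ≤ j + 1 then 2 / ((j : ℝ) + 1) else 0
  set far := fun k : ℕ+ ↦ (1 + |(k : ℝ) - j|) ^ (-(1 + β))
  have hnear := hasSum_pnat_ite_two_mul_le ((j : ℕ) + 1) (2 / ((j : ℝ) + 1))
  have hnear_le : ((((j : ℕ) + 1) / 2 : ℕ) : ℝ) * (2 / ((j : ℝ) + 1)) ≤ 1 := by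
    rw [mul_div_assoc', div_le_one (by positivity)]
    have : (((j : ℕ) + 1) / 2 : ℕ) * 2 ≤ (j : ℕ) + 1 := Nat.div_mul_le_self _ _
    exact_mod_cast this
  have hinj : Function.Injective fun k : ℕ+ ↦ (k : ℤ) - j := fun a b h ↦ by
    simpa using h
  have hint := summable_one_add_abs_int_rpow_neg (s := 1 + β) (by linarith)
  have hfar : Summable far := by
    simpa [far, Function.comp_def] using hint.comp_injective hinj
  have hfar_le : ∑' k, far k ≤ ∑' d : ℤ, (1 + |(d : ℝ)|) ^ (-(1 + β)) := by
    simpa [far, Function.comp_def] using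
      tsum_comp_le_tsum_of_inj hint (fun d ↦ by positivity) hinj
  have hbound : ∀ k : ℕ+, 1 / ((k : ℝ) ^ β * (1 + |(k : ℝ) - (j : ℝ)|)) ≤ near k + far k :=
    fun k ↦ one_div_rpow_mul_one_add_abs_sub_le hβ.le k.pos j.pos
  have hsum := (hnear.summable.add hfar).of_nonneg_of_le (fun k ↦ by positivity) hbound
  refine ⟨hsum, ?_⟩
  calc ∑' k : ℕ+, 1 / ((k : ℝ) ^ β * (1 + |(k : ℝ) - (j : ℝ)|))
      ≤ ∑' k, (near k + far k) := hsum.tsum_le_tsum hbound (hnear.summable.add hfar)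
    _ = ∑' k, near k + ∑' k, far k := hnear.summable.tsum_add hfar
    _ < 1 + (1 + 2 / β) := by
      rw [hnear.tsum_eq]
      linarith [tsum_one_add_abs_int_rpow_lt hβ]
    _ = 2 + 2 / β := by ring
end

section
/- Let s > 0 and 0 < β ≤ min{s/2, 1}. Then for all positive integers i and j, ∑_{k=1}^∞ (i∧j)^β / ( (i∧k)^β · (k∧j)^β · (1+|k−j|) ) · ( w(i,j) / ( w(i,k)·w(k,j) ) )^s ≤ 2^{s/2+2}/β. -/
/-!
Write `D(x, y) = √(x ∧ y) + |x - y|` (`weightNum`), so that `w(i, j) = D(i, j) / √(i ∧ j)`.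
The weight is submultiplicative, `w(i, j) ≤ w(i, k) w(k, j)`; as `2β ≤ s`, the `s`-th power of
the weight ratio may therefore be replaced by its `2β`-th power, which cancels the powers of the
minima and bounds the `k`-th term by `(D(i,j) / (D(i,k) D(k,j)))^(2β) / (1 + |k - j|)`.
A case analysis on the relative position of `i, j, k` gives `X D(i,j)² ≤ 2 D(i,k)² D(k,j)²`
with `X = j` if `k = j`, `X = 1 + (k - j)` if `k > j`, and, if `k < j`, either
`X = √k D(k,j) ≥ 1 + (j - k)` or `X = k + |i - k|`. The `k`-th term is then at most
`2^β X^(-β) / (1 + |k - j|)`, and these bounds are dominated by tails of `∑ (c + a n)^(-1-β)`,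
each at most `c^(-β) / (a β)` by convexity of `t ↦ t^(-β)`, plus at most `i` terms
`i^(-β) / (i + 1)`; altogether at most `4 / β`.
-/

/-- The weight `w(i,j) = (√(i∧j) + |i−j|)/√(i∧j)` for positive integers `i, j`. -/
noncomputable def w (i j : ℕ+) : ℝ :=
  (Real.sqrt (min (i : ℝ) (j : ℝ)) + |(i : ℝ) - (j : ℝ)|) / Real.sqrt (min (i : ℝ) (j : ℝ))

theorem rpow_neg_div_self {x : ℝ} (hx : 0 < x) (p : ℝ) : x ^ (-p) / x = x ^ (-(1 + p)) := by
  rw [show -(1 + p) = -p - 1 by ring, Real.rpow_sub_one hx.ne']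

theorem rpow_neg_div_le_of_le {x d β : ℝ} (hd : 0 < d) (h : d ≤ x) (hβ : 0 ≤ β) :
    x ^ (-β) / d ≤ d ^ (-(1 + β)) := by
  rw [← rpow_neg_div_self hd]
  exact div_le_div_of_nonneg_right (Real.rpow_le_rpow_of_nonpos hd h (neg_nonpos.2 hβ)) hd.le

theorem rpow_neg_div_le_of_ge {x d β : ℝ} (hx : 0 < x) (h : x ≤ d) :
    x ^ (-β) / d ≤ x ^ (-(1 + β)) := by
  rw [← rpow_neg_div_self hx]
  gcongr

/-- The tangent line of the convex function `t ↦ t ^ (-p)` at `x` lies below it at `y`. -/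
theorem mul_rpow_neg_one_add_mul_sub_le {x y p : ℝ} (hy : 0 < y) (hxy : y ≤ x) (hp : 0 ≤ p) :
    p * x ^ (-(1 + p)) * (x - y) ≤ y ^ (-p) - x ^ (-p) := by
  have hx : 0 < x := hy.trans_le hxy
  have hyx : 0 < y / x := div_pos hy hx
  have hbern : 1 + p * (1 - y / x) ≤ (y / x) ^ (-p) := by
    rw [Real.rpow_def_of_pos hyx]
    nlinarith [Real.log_le_sub_one_of_pos hyx, Real.add_one_le_exp (Real.log (y / x) * -p)]
  rw [Real.div_rpow hy.le hx.le, le_div_iff₀ (Real.rpow_pos_of_pos hx _)] at hbern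
  have hsplit : x ^ (-(1 + p)) * (x - y) = x ^ (-p) * (1 - y / x) := by
    rw [← rpow_neg_div_self hx]; field_simp
  linear_combination hbern + p * hsplit

theorem two_mul_mul_rpow_neg_le {x β : ℝ} (hx : 1 ≤ x) (hβ : 0 ≤ β) (hβ1 : β ≤ 1) :
    2 * β * (x * x ^ (-β)) ≤ x + 1 := by
  have hamgm : x ^ (1 - β) * 1 ^ β ≤ (1 - β) * x + β * 1 :=
    Real.geom_mean_le_arith_mean2_weighted (by linarith) hβ (by linarith) zero_le_one (by ring)
  rw [Real.one_rpow, mul_one, mul_one, Real.rpow_sub (by linarith), Real.rpow_one,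
    div_eq_mul_inv, ← Real.rpow_neg (by linarith)] at hamgm
  nlinarith [mul_le_mul_of_nonneg_left hamgm (by linarith : (0 : ℝ) ≤ 2 * β),
    mul_nonneg (sub_nonneg.2 hx) (sq_nonneg (1 - β)), mul_nonneg (sub_nonneg.2 hx) (sq_nonneg β)]

theorem summable_and_tsum_rpow_le {c a p : ℝ} (hc : 0 < c) (ha : 0 < a) (hp : 0 < p) :
    Summable (fun t : ℕ => (c + a * (t + 1)) ^ (-(1 + p))) ∧
      ∑' t : ℕ, (c + a * (t + 1)) ^ (-(1 + p)) ≤ c ^ (-p) / (a * p) := by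
  set g : ℕ → ℝ := fun t => (c + a * t) ^ (-p) / (a * p)
  have hnonneg (t : ℕ) : 0 ≤ (c + a * (t + 1)) ^ (-(1 + p)) := by positivity
  have hstep (t : ℕ) : (c + a * (t + 1)) ^ (-(1 + p)) ≤ g t - g (t + 1) := by
    have := mul_rpow_neg_one_add_mul_sub_le (x := c + a * (t + 1)) (y := c + a * t)
      (by positivity) (by linarith) hp.le
    simp only [g, Nat.cast_add, Nat.cast_one, ← sub_div]
    rw [le_div_iff₀ (by positivity)]
    linear_combination this
  have hpartial (n : ℕ) :
      ∑ t ∈ Finset.range n, (c + a * (t + 1)) ^ (-(1 + p)) ≤ c ^ (-p) / (a * p) := by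
    have : 0 ≤ g n := by positivity
    calc _ ≤ ∑ t ∈ Finset.range n, (g t - g (t + 1)) := Finset.sum_le_sum fun t _ => hstep t
      _ = g 0 - g n := Finset.sum_range_sub' g n
      _ ≤ g 0 := by linarith
      _ = c ^ (-p) / (a * p) := by simp only [g, Nat.cast_zero, mul_zero, add_zero]
  exact ⟨summable_of_sum_range_le hnonneg hpartial,
    Real.tsum_le_of_sum_range_le hnonneg hpartial⟩

theorem summable_and_tsum_le_of_injOn {α β : Type*} {f : α → ℝ} {g : β → ℝ} {s : Set α}
    (e : α → β) (he : s.InjOn e) (hfs : ∀ a ∉ s, f a = 0) (hf : ∀ a, 0 ≤ f a)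
    (hfg : ∀ a ∈ s, f a ≤ g (e a)) (hg : ∀ b, 0 ≤ g b) (hgs : Summable g) :
    Summable f ∧ ∑' a, f a ≤ ∑' b, g b := by
  have hinj : Function.Injective (fun a : s => e a) := he.injective
  have hle (a : s) : f a ≤ g (e a) := hfg a a.2
  have hsub : Summable (fun a : s => f a) :=
    Summable.of_nonneg_of_le (fun a => hf a) hle (hgs.comp_injective hinj)
  refine ⟨(Subtype.val_injective.summable_iff (by simpa using hfs)).1 hsub, ?_⟩
  rw [← tsum_subtype_eq_of_support_subset (s := s) fun a ha => by_contra fun h => ha (hfs a h)]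
  exact hsub.tsum_le_tsum_of_inj _ hinj (fun b _ => hg b) hle hgs

theorem summable_and_tsum_add_le {α : Type*} {f g : α → ℝ} {a b : ℝ}
    (hf : Summable f ∧ ∑' x, f x ≤ a) (hg : Summable g ∧ ∑' x, g x ≤ b) :
    Summable (fun x => f x + g x) ∧ ∑' x, (f x + g x) ≤ a + b :=
  ⟨hf.1.add hg.1, by rw [hf.1.tsum_add hg.1]; exact add_le_add hf.2 hg.2⟩

theorem summable_and_tsum_ite_lt_le (m : ℕ+) {c a p : ℝ} (hc : 0 < c) (ha : 0 < a)
    (hp : 0 < p) :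
    Summable (fun k : ℕ+ => if m < k then (c + a * |(k : ℝ) - m|) ^ (-(1 + p)) else 0) ∧
      ∑' k : ℕ+, (if m < k then (c + a * |(k : ℝ) - m|) ^ (-(1 + p)) else 0) ≤
        c ^ (-p) / (a * p) := by
  obtain ⟨hsum, hbound⟩ := summable_and_tsum_rpow_le hc ha hp
  refine (summable_and_tsum_le_of_injOn (s := {k | m < k}) (fun k : ℕ+ => (k : ℕ) - m - 1)
    ?_ (fun k (hk : ¬m < k) => if_neg hk) (fun k => ite_nonneg (by positivity) le_rfl) ?_
    (fun t => by positivity) hsum).imp_right (·.trans hbound)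
  · intro k (hk : m < k) l (hl : m < l) hkl
    have : (m : ℕ) < k := hk
    have : (m : ℕ) < l := hl
    exact PNat.coe_injective (by simp only at hkl; omega)
  · intro k (hk : m < k)
    have hk' : (m : ℕ) + 1 ≤ k := hk
    have : (m : ℝ) ≤ k := by exact_mod_cast hk.le
    rw [if_pos hk, Nat.sub_sub, Nat.cast_sub hk', abs_of_nonneg (by linarith)]
    push_cast
    exact le_of_eq (by ring_nf)

theorem summable_and_tsum_ite_gt_le (m : ℕ+) {c a p : ℝ} (hc : 0 < c) (ha : 0 < a)
    (hp : 0 < p) :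
    Summable (fun k : ℕ+ => if k < m then (c + a * |(k : ℝ) - m|) ^ (-(1 + p)) else 0) ∧
      ∑' k : ℕ+, (if k < m then (c + a * |(k : ℝ) - m|) ^ (-(1 + p)) else 0) ≤
        c ^ (-p) / (a * p) := by
  obtain ⟨hsum, hbound⟩ := summable_and_tsum_rpow_le hc ha hp
  refine (summable_and_tsum_le_of_injOn (s := {k | k < m}) (fun k : ℕ+ => (m : ℕ) - k - 1)
    ?_ (fun k (hk : ¬k < m) => if_neg hk) (fun k => ite_nonneg (by positivity) le_rfl) ?_
    (fun t => by positivity) hsum).imp_right (·.trans hbound)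
  · intro k (hk : k < m) l (hl : l < m) hkl
    have : (k : ℕ) < m := hk
    have : (l : ℕ) < m := hl
    exact PNat.coe_injective (by simp only at hkl; omega)
  · intro k (hk : k < m)
    have hk' : (k : ℕ) + 1 ≤ m := hk
    have : (k : ℝ) ≤ m := by exact_mod_cast hk.le
    rw [if_pos hk, Nat.sub_sub, Nat.cast_sub hk', abs_of_nonpos (by linarith)]
    push_cast
    exact le_of_eq (by ring_nf)

theorem summable_and_tsum_ite_le_eq (i : ℕ+) (c : ℝ) :
    Summable (fun k : ℕ+ => if k ≤ i then c else 0) ∧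
      ∑' k : ℕ+, (if k ≤ i then c else 0) = i * c := by
  have hfin : ∀ k ∉ Finset.Icc 1 i, (if k ≤ i then c else 0) = 0 := fun k hk => by
    rw [if_neg]; simpa [one_le] using hk
  refine ⟨summable_of_ne_finset_zero hfin, ?_⟩
  rw [tsum_eq_sum hfin, Finset.sum_ite_of_true fun k hk => (Finset.mem_Icc.1 hk).2,
    Finset.sum_const, PNat.card_Icc, nsmul_eq_mul]
  simp

noncomputable def weightNum (x y : ℝ) : ℝ := √(min x y) + |x - y|

section weightNum

variable {x y z : ℝ}

theorem weightNum_comm (x y : ℝ) : weightNum x y = weightNum y x := by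
  rw [weightNum, weightNum, min_comm, abs_sub_comm]

theorem weightNum_of_le (h : x ≤ y) : weightNum x y = √x + (y - x) := by
  rw [weightNum, min_eq_left h, abs_sub_comm, abs_of_nonneg (sub_nonneg.2 h)]

theorem weightNum_self (x : ℝ) : weightNum x x = √x := by
  simp [weightNum]

theorem one_le_weightNum (hx : 1 ≤ x) (hy : 1 ≤ y) : 1 ≤ weightNum x y := by
  have := Real.one_le_sqrt.2 (le_min hx hy)
  have := abs_nonneg (x - y)
  rw [weightNum]; linarith

theorem max_le_weightNum_sq (hx : 1 ≤ x) (hy : 1 ≤ y) : max x y ≤ weightNum x y ^ 2 := by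
  wlog hxy : x ≤ y generalizing x y
  · rw [max_comm, weightNum_comm]; exact this hy hx (le_of_not_ge hxy)
  have hs := Real.one_le_sqrt.2 hx
  rw [max_eq_right hxy, weightNum_of_le hxy]
  nlinarith [Real.sq_sqrt (zero_le_one.trans hx)]

theorem weightNum_mono {a b c d : ℝ} (ha : 1 ≤ a) (hab : a ≤ b) (hbc : b ≤ c)
    (hcd : c ≤ d) : weightNum b c ≤ weightNum a d := by
  rw [weightNum_of_le hbc, weightNum_of_le (hab.trans (hbc.trans hcd))]
  have hsa := Real.one_le_sqrt.2 ha
  have hsab : √a ≤ √b := Real.sqrt_le_sqrt hab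
  nlinarith [Real.sq_sqrt (zero_le_one.trans ha),
    Real.sq_sqrt (zero_le_one.trans (ha.trans hab))]

theorem min_mul_min_mul_weightNum_sq_le_of_le (hx : 1 ≤ x) (hz : 1 ≤ z) (hxy : x ≤ y) :
    min x z * min z y * weightNum x y ^ 2 ≤
      min x y * (weightNum x z ^ 2 * weightNum z y ^ 2) := by
  rw [min_eq_left hxy]
  rcases le_total z x with hzx | hxz
  · rw [min_eq_right hzx, min_eq_left (hzx.trans hxy)]
    have hD : weightNum x y ≤ weightNum z y := weightNum_mono hz hzx hxy le_rfl
    have hx1 : x ≤ weightNum x z ^ 2 := (le_max_left _ _).trans (max_le_weightNum_sq hx hz)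
    have hzz : z * z ≤ x * weightNum x z ^ 2 :=
      mul_le_mul hzx (hzx.trans hx1) (by linarith) (by linarith)
    have hD0 := one_le_weightNum hx (hx.trans hxy)
    calc z * z * weightNum x y ^ 2 ≤ x * weightNum x z ^ 2 * weightNum z y ^ 2 :=
          mul_le_mul hzz (pow_le_pow_left₀ (by linarith) hD 2) (sq_nonneg _) (by positivity)
      _ = _ := by ring
  rw [min_eq_left hxz]
  rcases le_total z y with hzy | hyz
  · rw [min_eq_left hzy]
    have hsz : √z ≤ weightNum x z := weightNum_self z ▸ weightNum_mono hx hxz le_rfl le_rfl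
    have hsplit : weightNum x y = weightNum x z + (y - z) := by
      rw [weightNum_of_le hxy, weightNum_of_le hxz]; ring
    have hkey : √z * weightNum x y ≤ weightNum x z * weightNum z y := by
      rw [hsplit, weightNum_of_le hzy]; nlinarith
    have hsq := pow_le_pow_left₀
      (mul_nonneg (Real.sqrt_nonneg z) (by linarith [one_le_weightNum hx (hx.trans hxy)])) hkey 2
    rw [mul_pow, Real.sq_sqrt (by linarith)] at hsq
    nlinarith
  · rw [min_eq_right hyz]
    have hD : weightNum x y ≤ weightNum x z := weightNum_mono hx le_rfl hxy hyz
    have hy2 : y ≤ weightNum z y ^ 2 :=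
      (le_max_right _ _).trans (max_le_weightNum_sq hz (hx.trans hxy))
    have := pow_le_pow_left₀ (by linarith [one_le_weightNum hx (hx.trans hxy)]) hD 2
    have : y * weightNum x y ^ 2 ≤ weightNum z y ^ 2 * weightNum x z ^ 2 :=
      mul_le_mul hy2 this (sq_nonneg _) (sq_nonneg _)
    nlinarith

theorem min_mul_min_mul_weightNum_sq_le (hx : 1 ≤ x) (hy : 1 ≤ y) (hz : 1 ≤ z) :
    min x z * min z y * weightNum x y ^ 2 ≤
      min x y * (weightNum x z ^ 2 * weightNum z y ^ 2) := by
  rcases le_total x y with hxy | hyx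
  · exact min_mul_min_mul_weightNum_sq_le_of_le hx hz hxy
  · have := min_mul_min_mul_weightNum_sq_le_of_le hy hz hyx
    rw [min_comm y x, weightNum_comm y x, min_comm y z, weightNum_comm y z, min_comm z x,
      weightNum_comm z x] at this
    linarith

theorem one_add_sub_mul_weightNum_sq_le (hx : 1 ≤ x) (hy : 1 ≤ y) (hyz : y ≤ z) :
    (1 + (z - y)) * weightNum x y ^ 2 ≤ 2 * (weightNum x z ^ 2 * weightNum z y ^ 2) := by
  have hz : 1 ≤ z := hy.trans hyz
  have hD2 : weightNum z y = √y + (z - y) := by rw [weightNum_comm, weightNum_of_le hyz]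
  have hd : 1 + (z - y) ≤ weightNum z y := by linarith [hD2, Real.one_le_sqrt.2 hy]
  have hD0 := one_le_weightNum hx hy
  have hD1 := one_le_weightNum hx hz
  have hz1 : z ≤ weightNum x z ^ 2 := (le_max_right _ _).trans (max_le_weightNum_sq hx hz)
  rcases le_total x y with hxy | hyx
  · have hD : weightNum x y ≤ weightNum x z := weightNum_mono hx le_rfl hxy hyz
    calc (1 + (z - y)) * weightNum x y ^ 2 ≤ weightNum z y * weightNum x z ^ 2 :=
          mul_le_mul hd (pow_le_pow_left₀ (by linarith) hD 2) (sq_nonneg _) (by linarith)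
      _ ≤ 2 * (weightNum x z ^ 2 * weightNum z y ^ 2) := by
          nlinarith [mul_le_mul_of_nonneg_right
            (show weightNum z y ≤ weightNum z y ^ 2 by nlinarith) (sq_nonneg (weightNum x z))]
  rcases le_total x z with hxz | hzx
  · have hD : weightNum x y ≤ weightNum z y := by
      rw [weightNum_comm x y, weightNum_comm z y]; exact weightNum_mono hy le_rfl hyx hxz
    have := pow_le_pow_left₀ (by linarith) hD 2
    nlinarith [mul_le_mul (show 1 + (z - y) ≤ weightNum x z ^ 2 by linarith) this (sq_nonneg _)
      (sq_nonneg _)]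
  · have hD : weightNum x y ≤ weightNum x z + (z - y) := by
      rw [weightNum_comm x y, weightNum_of_le hyx, weightNum_comm x z, weightNum_of_le hzx]
      linarith [Real.sqrt_le_sqrt hyz]
    have h1 := pow_le_pow_left₀ (by linarith) hD 2
    have h2 : (weightNum x z + (z - y)) ^ 2 ≤ (1 + 2 * (z - y)) * weightNum x z ^ 2 := by
      nlinarith [mul_nonneg (sub_nonneg.2 hyz) (sq_nonneg (weightNum x z - 1)),
        mul_nonneg (sub_nonneg.2 hyz) (by linarith : (0 : ℝ) ≤ weightNum x z ^ 2 - 1 - (z - y))]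
    have h3 := pow_le_pow_left₀ (by linarith) hd 2
    nlinarith [mul_le_mul_of_nonneg_left (h1.trans h2) (by linarith : (0 : ℝ) ≤ 1 + (z - y)),
      mul_le_mul_of_nonneg_left h3 (sq_nonneg (weightNum x z)), sq_nonneg (weightNum x z)]

theorem weightNum_sq_le_or_of_le_of_le (hx : 1 ≤ x) (hxz : x ≤ z) (hzy : z ≤ y) :
    √z * weightNum z y * weightNum x y ^ 2 ≤ 2 * (weightNum x z ^ 2 * weightNum z y ^ 2) ∨
      (z + |x - z|) * weightNum x y ^ 2 ≤ 2 * (weightNum x z ^ 2 * weightNum z y ^ 2) := by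
  have hsx := Real.one_le_sqrt.2 hx
  have hsz : √z ≤ weightNum x z := weightNum_self z ▸ weightNum_mono hx hxz le_rfl le_rfl
  have hD : weightNum x y = weightNum x z + (y - z) := by
    rw [weightNum_of_le (hxz.trans hzy), weightNum_of_le hxz]; ring
  have hD1 : weightNum x z = √x + (z - x) := weightNum_of_le hxz
  rw [hD, weightNum_of_le hzy, abs_of_nonpos (by linarith : x - z ≤ 0)]
  set D₁ := weightNum x z
  set v := y - z
  have hv : 0 ≤ v := by simp only [v]; linarith
  have hsz0 : 0 ≤ √z := Real.sqrt_nonneg z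
  rcases le_or_gt (√z * v) (D₁ ^ 2) with hle | hlt
  · -- `2 D₁² (√z + v) - √z (D₁ + v)² = (D₁² - √z v) (√z + v) + v (D₁ - √z)²`
    left
    have : √z * (D₁ + v) ^ 2 ≤ 2 * D₁ ^ 2 * (√z + v) := by
      nlinarith [mul_nonneg (sub_nonneg.2 hle) (add_nonneg hsz0 hv),
        mul_nonneg hv (sq_nonneg (D₁ - √z))]
    nlinarith [mul_le_mul_of_nonneg_left this (add_nonneg hsz0 hv)]
  · right
    have hD₁sq : z - (x - z) ≤ D₁ ^ 2 := by
      nlinarith [Real.sq_sqrt (zero_le_one.trans hx),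
        mul_nonneg (sub_nonneg.2 hsx) (sub_nonneg.2 hxz)]
    -- as `z - x ≤ D₁² < √z v`
    have hu : z - x ≤ 2 * (√z * v) := by nlinarith
    nlinarith [mul_le_mul_of_nonneg_right hD₁sq (sq_nonneg v),
      Real.sq_sqrt (zero_le_one.trans (hx.trans hxz)),
      mul_le_mul_of_nonneg_right hu (sq_nonneg D₁), sq_nonneg (D₁ - v)]

theorem weightNum_sq_le_or_of_le (hx : 1 ≤ x) (hz : 1 ≤ z) (hzy : z ≤ y) :
    √z * weightNum z y * weightNum x y ^ 2 ≤ 2 * (weightNum x z ^ 2 * weightNum z y ^ 2) ∨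
      (z + |x - z|) * weightNum x y ^ 2 ≤ 2 * (weightNum x z ^ 2 * weightNum z y ^ 2) := by
  have hD0 := one_le_weightNum hx (hz.trans hzy)
  rcases le_total x z with hxz | hzx
  · exact weightNum_sq_le_or_of_le_of_le hx hxz hzy
  rcases le_total y x with hyx | hxy
  · left
    have hD : weightNum x y ≤ weightNum x z := by
      rw [weightNum_comm x y, weightNum_comm x z]; exact weightNum_mono hz hzy hyx le_rfl
    have hsz : √z ≤ weightNum z y := weightNum_self z ▸ weightNum_mono hz le_rfl le_rfl hzy
    have := mul_le_mul hsz (pow_le_pow_left₀ (by linarith) hD 2) (sq_nonneg _)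
      (by linarith [one_le_weightNum hz (hz.trans hzy)])
    nlinarith [mul_le_mul_of_nonneg_left this (by linarith [one_le_weightNum hz (hz.trans hzy)] :
      (0 : ℝ) ≤ weightNum z y)]
  · right
    rw [abs_of_nonneg (sub_nonneg.2 hzx), add_sub_cancel]
    have hD : weightNum x y ≤ weightNum z y := weightNum_mono hz hzx hxy le_rfl
    have hx2 : x ≤ weightNum x z ^ 2 :=
      (le_max_left _ _).trans (max_le_weightNum_sq (hz.trans hzx) hz)
    nlinarith [mul_le_mul hx2 (pow_le_pow_left₀ (by linarith) hD 2) (sq_nonneg _) (sq_nonneg _),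
      sq_nonneg (weightNum x z), sq_nonneg (weightNum z y)]

end weightNum

theorem pnat_cast_min (a b : ℕ+) : ((min a b : ℕ+) : ℝ) = min (a : ℝ) b := by
  rcases le_total a b with h | h <;> simp [h]

theorem one_le_pnat_cast (a : ℕ+) : (1 : ℝ) ≤ a := Nat.one_le_cast.2 a.pos

theorem w_eq_weightNum_div (i j : ℕ+) : w i j = weightNum i j / √(min (i : ℝ) j) := rfl

theorem w_pos (i j : ℕ+) : 0 < w i j := by
  have := one_le_weightNum (one_le_pnat_cast i) (one_le_pnat_cast j)
  rw [w_eq_weightNum_div]; positivity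

theorem w_div_mul_w_sq (i j k : ℕ+) : (w i j / (w i k * w k j)) ^ 2 =
    min (i : ℝ) k * min (k : ℝ) j / min (i : ℝ) j *
      (weightNum i j / (weightNum i k * weightNum k j)) ^ 2 := by
  have := one_le_weightNum (one_le_pnat_cast i) (one_le_pnat_cast k)
  have := one_le_weightNum (one_le_pnat_cast k) (one_le_pnat_cast j)
  simp only [w_eq_weightNum_div, div_pow, mul_pow,
    Real.sq_sqrt (by positivity : (0 : ℝ) ≤ min (i : ℝ) k),
    Real.sq_sqrt (by positivity : (0 : ℝ) ≤ min (k : ℝ) j),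
    Real.sq_sqrt (by positivity : (0 : ℝ) ≤ min (i : ℝ) j)]
  field_simp

theorem w_le_w_mul_w (i j k : ℕ+) : w i j ≤ w i k * w k j := by
  have hi := one_le_pnat_cast i
  have hj := one_le_pnat_cast j
  have hk := one_le_pnat_cast k
  have := one_le_weightNum hi hk
  have := one_le_weightNum hk hj
  have hprod := mul_pos (w_pos i k) (w_pos k j)
  have hsq : (w i j / (w i k * w k j)) ^ 2 ≤ 1 := by
    rw [w_div_mul_w_sq, div_pow, mul_pow, div_mul_div_comm, div_le_one (by positivity)]
    nlinarith [min_mul_min_mul_weightNum_sq_le hi hj hk]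
  rw [← div_le_one hprod]
  exact (pow_le_one_iff_of_nonneg (div_nonneg (w_pos i j).le hprod.le) two_ne_zero).1 hsq

noncomputable def convolutionTerm (s β : ℝ) (i j k : ℕ+) : ℝ :=
  ((min i j : ℕ+) : ℝ) ^ β /
      (((min i k : ℕ+) : ℝ) ^ β * ((min k j : ℕ+) : ℝ) ^ β *
        (1 + |(k : ℝ) - (j : ℝ)|)) *
    (w i j / (w i k * w k j)) ^ s

theorem convolutionTerm_nonneg (s β : ℝ) (i j k : ℕ+) : 0 ≤ convolutionTerm s β i j k := by
  have := w_pos i j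
  have := w_pos i k
  have := w_pos k j
  rw [convolutionTerm]; positivity

/-- Since `w` is submultiplicative and `2β ≤ s`, the `s`-th power of the weight ratio can be
replaced by its `2β`-th power, which cancels the powers of `i∧j`, `i∧k` and `k∧j`. -/
theorem convolutionTerm_le {s β : ℝ} (hβ : 0 ≤ β) (hβs : 2 * β ≤ s) (i j k : ℕ+) :
    convolutionTerm s β i j k ≤
      ((weightNum i j / (weightNum i k * weightNum k j)) ^ 2) ^ β / (1 + |(k : ℝ) - j|) := by
  have hprod := mul_pos (w_pos i k) (w_pos k j)
  set ρ := w i j / (w i k * w k j) with hρ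
  have hρ0 : 0 ≤ ρ := div_nonneg (w_pos i j).le hprod.le
  have hρs : ρ ^ s ≤ (ρ ^ 2) ^ β := by
    rw [← Real.rpow_natCast, ← Real.rpow_mul hρ0]
    exact Real.rpow_le_rpow_of_exponent_ge' hρ0 ((div_le_one hprod).2 (w_le_w_mul_w i j k))
      (by positivity) (by push_cast; linarith)
  rw [convolutionTerm, pnat_cast_min, pnat_cast_min, pnat_cast_min]
  calc _ ≤ min (i : ℝ) j ^ β /
        (min (i : ℝ) k ^ β * min (k : ℝ) j ^ β * (1 + |(k : ℝ) - j|)) * (ρ ^ 2) ^ β := by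
        gcongr
    _ = (min (i : ℝ) j / (min (i : ℝ) k * min (k : ℝ) j) * ρ ^ 2) ^ β /
        (1 + |(k : ℝ) - j|) := by
        rw [Real.mul_rpow (by positivity) (by positivity),
          Real.div_rpow (by positivity) (by positivity),
          Real.mul_rpow (by positivity) (by positivity)]
        field_simp
    _ = _ := by
        rw [hρ, w_div_mul_w_sq]
        field_simp

theorem convolutionTerm_le_of_mul_sq_le {s β X : ℝ} (hβ : 0 ≤ β) (hβs : 2 * β ≤ s)
    {i j k : ℕ+} (hX : 0 < X)
    (h : X * weightNum i j ^ 2 ≤ 2 * (weightNum i k ^ 2 * weightNum k j ^ 2)) :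
    convolutionTerm s β i j k ≤ 2 ^ β * (X ^ (-β) / (1 + |(k : ℝ) - j|)) := by
  have := one_le_weightNum (one_le_pnat_cast i) (one_le_pnat_cast k)
  have := one_le_weightNum (one_le_pnat_cast k) (one_le_pnat_cast j)
  have hr : (weightNum i j / (weightNum i k * weightNum k j)) ^ 2 ≤ 2 / X := by
    rw [div_pow, mul_pow, div_le_div_iff₀ (by positivity) hX]; linarith
  refine (convolutionTerm_le hβ hβs i j k).trans ?_
  rw [mul_div_assoc', Real.rpow_neg hX.le, ← div_eq_mul_inv, ← Real.div_rpow zero_le_two hX.le]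
  gcongr

noncomputable def majorantJ (β : ℝ) (j k : ℕ+) : ℝ :=
  (if k < j then (1 + |(k : ℝ) - j|) ^ (-(1 + β)) else 0) +
  (if k = j then (j : ℝ) ^ (-β) else 0) +
  (if j < k then (1 + |(k : ℝ) - j|) ^ (-(1 + β)) else 0)

noncomputable def majorantI (β : ℝ) (i k : ℕ+) : ℝ :=
  (if k ≤ i then (i : ℝ) ^ (-β) / (i + 1) else 0) +
  (if i < k then (i + 2 * |(k : ℝ) - i|) ^ (-(1 + β)) else 0)

theorem summable_majorantJ_and_tsum_le {β : ℝ} (hβ : 0 < β) (j : ℕ+) :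
    Summable (majorantJ β j) ∧ ∑' k, majorantJ β j k ≤ 1 / β + 1 + 1 / β := by
  have hP2 : Summable (fun k : ℕ+ => if k = j then (j : ℝ) ^ (-β) else 0) ∧
      ∑' k : ℕ+, (if k = j then (j : ℝ) ^ (-β) else 0) ≤ 1 :=
    ⟨(hasSum_ite_eq j _).summable, (tsum_ite_eq j _).trans_le
      (Real.rpow_le_one_of_one_le_of_nonpos (one_le_pnat_cast j) (by linarith))⟩
  exact summable_and_tsum_add_le (summable_and_tsum_add_le
    (by simpa only [one_mul, Real.one_rpow] using summable_and_tsum_ite_gt_le j one_pos one_pos hβ)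
    hP2)
    (by simpa only [one_mul, Real.one_rpow] using summable_and_tsum_ite_lt_le j one_pos one_pos hβ)

theorem summable_majorantI_and_tsum_le {β : ℝ} (hβ : 0 < β) (hβ1 : β ≤ 1) (i : ℕ+) :
    Summable (majorantI β i) ∧ ∑' k, majorantI β i k ≤ 1 / β := by
  have hi := one_le_pnat_cast i
  have hP4 := summable_and_tsum_ite_le_eq i ((i : ℝ) ^ (-β) / (i + 1))
  refine (summable_and_tsum_add_le ⟨hP4.1, hP4.2.le⟩
    (summable_and_tsum_ite_lt_le i (c := i) (by linarith) two_pos hβ)).imp_right (·.trans ?_)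
  have h4 : (i : ℝ) * ((i : ℝ) ^ (-β) / (i + 1)) ≤ 1 / (2 * β) := by
    rw [mul_div_assoc', div_le_div_iff₀ (by positivity) (by positivity)]
    linarith [two_mul_mul_rpow_neg_le hi hβ.le hβ1]
  have h5 : (i : ℝ) ^ (-β) / (2 * β) ≤ 1 / (2 * β) := div_le_div_of_nonneg_right
    (Real.rpow_le_one_of_one_le_of_nonpos hi (by linarith)) (by positivity)
  have : 1 / β = 1 / (2 * β) + 1 / (2 * β) := by field_simp; ring
  linarith

section majorant

variable {β : ℝ} {i j k : ℕ+}

theorem majorantI_nonneg : 0 ≤ majorantI β i k :=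
  add_nonneg (ite_nonneg (by positivity) le_rfl) (ite_nonneg (by positivity) le_rfl)

theorem exists_le_majorant_of_eq (hkj : k = j) : ∃ X > 0,
    X * weightNum i j ^ 2 ≤ 2 * (weightNum i k ^ 2 * weightNum k j ^ 2) ∧
      X ^ (-β) / (1 + |(k : ℝ) - j|) ≤ majorantJ β j k + majorantI β i k := by
  subst hkj
  refine ⟨k, by positivity, ?_, ?_⟩
  · rw [weightNum_self, Real.sq_sqrt (by positivity)]
    nlinarith [sq_nonneg (weightNum i k)]
  · simp only [majorantJ, sub_self, abs_zero, add_zero, div_one, lt_irrefl, if_false, if_true,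
      zero_add]
    linarith [majorantI_nonneg (β := β) (i := i) (k := k)]

theorem exists_le_majorant_of_gt (hjk : j < k) : ∃ X > 0,
    X * weightNum i j ^ 2 ≤ 2 * (weightNum i k ^ 2 * weightNum k j ^ 2) ∧
      X ^ (-β) / (1 + |(k : ℝ) - j|) ≤ majorantJ β j k + majorantI β i k := by
  have hjk' : (j : ℝ) ≤ k := by exact_mod_cast hjk.le
  refine ⟨1 + |(k : ℝ) - j|, by positivity, ?_, ?_⟩
  · rw [abs_of_nonneg (sub_nonneg.2 hjk')]
    exact one_add_sub_mul_weightNum_sq_le (one_le_pnat_cast i) (one_le_pnat_cast j) hjk'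
  · rw [majorantJ, if_neg hjk.not_gt, if_neg hjk.ne', if_pos hjk,
      rpow_neg_div_self (by positivity)]
    linarith [majorantI_nonneg (β := β) (i := i) (k := k)]

theorem exists_le_majorant_of_lt (hβ : 0 ≤ β) (hkj : k < j) : ∃ X > 0,
    X * weightNum i j ^ 2 ≤ 2 * (weightNum i k ^ 2 * weightNum k j ^ 2) ∧
      X ^ (-β) / (1 + |(k : ℝ) - j|) ≤ majorantJ β j k + majorantI β i k := by
  have hk := one_le_pnat_cast k
  have hkj' : (k : ℝ) ≤ j := by exact_mod_cast hkj.le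
  have hd : 0 < 1 + |(k : ℝ) - j| := by positivity
  have hJ : majorantJ β j k = (1 + |(k : ℝ) - j|) ^ (-(1 + β)) := by
    rw [majorantJ, if_pos hkj, if_neg hkj.ne, if_neg hkj.not_gt, add_zero, add_zero]
  have hnear {X : ℝ} (hX : 1 + |(k : ℝ) - j| ≤ X) :
      X ^ (-β) / (1 + |(k : ℝ) - j|) ≤ majorantJ β j k + majorantI β i k := by
    linarith [rpow_neg_div_le_of_le hd hX hβ, majorantI_nonneg (β := β) (i := i) (k := k)]
  rcases weightNum_sq_le_or_of_le (one_le_pnat_cast i) hk hkj' with h | h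
  · have := one_le_weightNum hk (one_le_pnat_cast j)
    refine ⟨√k * weightNum k j, mul_pos (by positivity) (by linarith), h, hnear ?_⟩
    rw [weightNum_of_le hkj', abs_of_nonpos (by linarith), mul_add,
      Real.mul_self_sqrt (by linarith)]
    nlinarith [Real.one_le_sqrt.2 hk]
  refine ⟨k + |(i : ℝ) - k|, by positivity, h, ?_⟩
  rcases le_or_gt (1 + |(k : ℝ) - j|) (k + |(i : ℝ) - k|) with hX | hX
  · exact hnear hX
  have hJ0 : 0 ≤ majorantJ β j k := hJ ▸ by positivity
  rcases le_or_gt k i with hki | hik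
  · have hki' : (k : ℝ) ≤ i := by exact_mod_cast hki
    have hXeq : (k : ℝ) + |(i : ℝ) - k| = i := by
      rw [abs_of_nonneg (sub_nonneg.2 hki')]; ring
    -- `i` and `1 + |k - j|` are integers, so `i < 1 + |k - j|` forces `i + 1 ≤ 1 + |k - j|`
    have hint : (i : ℝ) + 1 ≤ 1 + |(k : ℝ) - j| := by
      rw [hXeq, abs_of_nonpos (by linarith)] at hX
      rw [abs_of_nonpos (by linarith)]
      have : (i : ℕ) + k < 1 + j := by exact_mod_cast (by linarith : (i : ℝ) + k < 1 + j)
      have : ((i : ℕ) + k + 1 : ℝ) ≤ 1 + j := by exact_mod_cast Nat.succ_le_of_lt this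
      linarith
    rw [majorantI, if_pos hki, if_neg hki.not_gt, add_zero, hXeq]
    linarith [div_le_div_of_nonneg_left (by positivity : (0 : ℝ) ≤ (i : ℝ) ^ (-β))
      (by positivity) hint]
  · have hik' : (i : ℝ) ≤ k := by exact_mod_cast hik.le
    have hXeq : (k : ℝ) + |(i : ℝ) - k| = i + 2 * |(k : ℝ) - i| := by
      rw [abs_sub_comm, abs_of_nonneg (sub_nonneg.2 hik')]; ring
    rw [majorantI, if_neg hik.not_ge, if_pos hik, zero_add, hXeq]
    rw [hXeq] at hX
    linarith [rpow_neg_div_le_of_ge (β := β) (by positivity) hX.le]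

end majorant

theorem convolutionTerm_le_two_rpow_mul_majorant {s β : ℝ} (hβ : 0 ≤ β) (hβs : 2 * β ≤ s)
    (i j k : ℕ+) :
    convolutionTerm s β i j k ≤ 2 ^ β * (majorantJ β j k + majorantI β i k) := by
  obtain ⟨X, hX, hXD, hXm⟩ : ∃ X > 0,
      X * weightNum i j ^ 2 ≤ 2 * (weightNum i k ^ 2 * weightNum k j ^ 2) ∧
        X ^ (-β) / (1 + |(k : ℝ) - j|) ≤ majorantJ β j k + majorantI β i k := by
    rcases lt_trichotomy k j with hkj | hkj | hkj
    · exact exists_le_majorant_of_lt hβ hkj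
    · exact exists_le_majorant_of_eq hkj
    · exact exists_le_majorant_of_gt hkj
  exact (convolutionTerm_le_of_mul_sq_le hβ hβs hX hXD).trans (by gcongr)

theorem key_convolution_estimate_general (s β : ℝ) (hβ : 0 < β)
    (hβs : β ≤ min (s / 2) 1) (i j : ℕ+) :
    Summable (fun k : ℕ+ =>
      ((min i j : ℕ+) : ℝ) ^ β /
          (((min i k : ℕ+) : ℝ) ^ β * ((min k j : ℕ+) : ℝ) ^ β * (1 + |(k : ℝ) - (j : ℝ)|)) *
        (w i j / (w i k * w k j)) ^ s) ∧
    ∑' k : ℕ+,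
      ((min i j : ℕ+) : ℝ) ^ β /
          (((min i k : ℕ+) : ℝ) ^ β * ((min k j : ℕ+) : ℝ) ^ β * (1 + |(k : ℝ) - (j : ℝ)|)) *
        (w i j / (w i k * w k j)) ^ s ≤ 2 ^ (s / 2 + 2) / β := by
  obtain ⟨hβs2, hβ1⟩ := le_min_iff.1 hβs
  obtain ⟨hH, hHle⟩ := summable_and_tsum_add_le (summable_majorantJ_and_tsum_le hβ j)
    (summable_majorantI_and_tsum_le hβ hβ1 i)
  have hle (k : ℕ+) :
      convolutionTerm s β i j k ≤ 2 ^ β * (majorantJ β j k + majorantI β i k) :=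
    convolutionTerm_le_two_rpow_mul_majorant hβ.le (by linarith) i j k
  have hT : Summable (convolutionTerm s β i j) :=
    (hH.mul_left _).of_nonneg_of_le (convolutionTerm_nonneg s β i j) hle
  refine ⟨hT, ?_⟩
  have h4 : 1 / β + 1 + 1 / β + 1 / β ≤ 4 / β := by
    have : 1 ≤ 1 / β := (one_le_div hβ).2 hβ1
    linarith [show 4 / β = 4 * (1 / β) by ring]
  calc ∑' k, convolutionTerm s β i j k
        ≤ ∑' k, 2 ^ β * (majorantJ β j k + majorantI β i k) :=
          hT.tsum_le_tsum hle (hH.mul_left _)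
    _ = 2 ^ β * ∑' k, (majorantJ β j k + majorantI β i k) := tsum_mul_left
    _ ≤ 2 ^ β * (4 / β) := mul_le_mul_of_nonneg_left (hHle.trans h4) (by positivity)
    _ ≤ 2 ^ (s / 2) * (4 / β) := by
        gcongr
        exact one_le_two
    _ = 2 ^ (s / 2 + 2) / β := by
        rw [Real.rpow_add two_pos, Real.rpow_two]; ring

/-- Let `s > 0` and `0 < β ≤ min{s/2, 1}`. Then for all positive integers `i` and `j`,
`∑_{k≥1} (i∧j)^β / ((i∧k)^β (k∧j)^β (1+|k−j|)) · (w(i,j)/(w(i,k)w(k,j)))^s ≤ 2^{s/2+2}/β`. -/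
theorem key_convolution_estimate (s β : ℝ) (hs : 0 < s) (hβ : 0 < β)
    (hβs : β ≤ min (s / 2) 1) (i j : ℕ+) :
    Summable (fun k : ℕ+ =>
      ((min i j : ℕ+) : ℝ) ^ β /
          (((min i k : ℕ+) : ℝ) ^ β * ((min k j : ℕ+) : ℝ) ^ β * (1 + |(k : ℝ) - (j : ℝ)|)) *
        (w i j / (w i k * w k j)) ^ s) ∧
    ∑' k : ℕ+,
      ((min i j : ℕ+) : ℝ) ^ β /
          (((min i k : ℕ+) : ℝ) ^ β * ((min k j : ℕ+) : ℝ) ^ β * (1 + |(k : ℝ) - (j : ℝ)|)) *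
        (w i j / (w i k * w k j)) ^ s ≤ 2 ^ (s / 2 + 2) / β :=
  key_convolution_estimate_general s β hβ hβs i j
end

section
/- Let s > 0 and 0 < β ≤ min{s/2, 1}. Let A, B ∈ M_{s,β}^+. Then for all i, j the series ∑_{k≥1} A_i^k B_k^j and ∑_{k≥1} B_i^k A_k^j converge absolutely in operator norm, the products AB and BA belong to M_{s,β}^+, and |AB|_{s,β+} ≤ (2^{s/2+3}/β)·|A|_{s,β+}·|B|_{s,β+} and |BA|_{s,β+} ≤ (2^{s/2+3}/β)·|A|_{s,β+}·|B|_{s,β+}. -/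
/-- The dimension `2·d_j` of the `j`-th block. -/
def dim (d : ℕ+ → ℕ+) (j : ℕ+) : ℕ := 2 * d j

open Real

namespace BlockMatrix

noncomputable def wReal (x y : ℝ) : ℝ := (√(min x y) + |x - y|) / √(min x y)

noncomputable def weightPlus (s β x y : ℝ) : ℝ := min x y ^ β * wReal x y ^ s * (1 + |x - y|)

section Weight

variable {s β x y z : ℝ}

lemma wReal_comm (x y : ℝ) : wReal x y = wReal y x := by
  rw [wReal, wReal, min_comm, abs_sub_comm]

lemma wReal_nonneg (x y : ℝ) : 0 ≤ wReal x y := by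
  unfold wReal; positivity

lemma wReal_of_le (hx : 0 < x) (hxy : x ≤ y) : wReal x y = 1 + (y - x) / √x := by
  rw [wReal, min_eq_left hxy, abs_sub_comm, abs_of_nonneg (sub_nonneg.2 hxy), add_div,
    div_self (sqrt_pos.2 hx).ne']

lemma one_le_wReal (hx : 0 < x) (hxy : x ≤ y) : 1 ≤ wReal x y := by
  rw [wReal_of_le hx hxy]
  have : 0 ≤ (y - x) / √x := div_nonneg (sub_nonneg.2 hxy) (sqrt_nonneg x)
  linarith

lemma sqrt_mul_wReal (hx : 0 < x) (hxy : x ≤ y) : √x * wReal x y = √x + (y - x) := by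
  rw [wReal_of_le hx hxy, mul_add, mul_one, mul_div_cancel₀ _ (sqrt_pos.2 hx).ne']

lemma sqrt_le_sqrt_add_sub (hx : 1 ≤ x) (hxy : x ≤ y) : √y ≤ √x + (y - x) := by
  have hsx : 1 ≤ √x := one_le_sqrt.2 hx
  have hsxy : √x ≤ √y := sqrt_le_sqrt hxy
  nlinarith [sq_sqrt (zero_le_one.trans hx), sq_sqrt (zero_le_one.trans (hx.trans hxy))]

lemma wReal_le_wReal_of_le_left (hz : 0 < z) (hzx : z ≤ x) (hxy : x ≤ y) :
    wReal x y ≤ wReal z y := by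
  rw [wReal_of_le (hz.trans_le hzx) hxy, wReal_of_le hz (hzx.trans hxy)]
  gcongr
  linarith

lemma wReal_le_wReal_of_le_right (hx : 0 < x) (hxy : x ≤ y) (hyz : y ≤ z) :
    wReal x y ≤ wReal x z := by
  rw [wReal_of_le hx hxy, wReal_of_le hx (hxy.trans hyz)]
  gcongr

lemma wReal_le_mul (hx : 1 ≤ x) (hxz : x ≤ z) (hzy : z ≤ y) :
    wReal x y ≤ wReal x z * wReal z y := by
  have hx0 : 0 < x := zero_lt_one.trans_le hx
  have hz0 : 0 < z := hx0.trans_le hxz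
  have hsx := sqrt_pos.2 hx0
  have hsz := sqrt_pos.2 hz0
  rw [wReal_of_le hx0 (hxz.trans hzy), wReal_of_le hx0 hxz, wReal_of_le hz0 hzy]
  have key : (y - z) * √z ≤ (y - z) * (√x + (z - x)) :=
    mul_le_mul_of_nonneg_left (sqrt_le_sqrt_add_sub hx hxz) (sub_nonneg.2 hzy)
  rw [← sub_nonneg]
  have e : (1 + (z - x) / √x) * (1 + (y - z) / √z) - (1 + (y - x) / √x)
      = ((y - z) * (√x + (z - x)) - (y - z) * √z) / (√x * √z) := by
    field_simp
    ring
  rw [e]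
  exact div_nonneg (sub_nonneg.2 key) (by positivity)

lemma rpow_le_rpow_mul_wReal_rpow (hβ : 0 ≤ β) (hβs : β ≤ s / 2) (hz : 1 ≤ z) (hzx : z ≤ x) :
    x ^ β ≤ z ^ β * wReal z x ^ s := by
  have hz0 : 0 < z := zero_lt_one.trans_le hz
  have hs : 0 ≤ s := by linarith
  have hratio : √(x / z) ≤ wReal z x := by
    rw [wReal_of_le hz0 hzx, sqrt_div' _ hz0.le, div_le_iff₀ (sqrt_pos.2 hz0), add_mul, one_mul,
      div_mul_cancel₀ _ (sqrt_pos.2 hz0).ne']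
    exact sqrt_le_sqrt_add_sub hz hzx
  calc x ^ β = z ^ β * (x / z) ^ β := by
        rw [← mul_rpow hz0.le (div_nonneg (hz0.le.trans hzx) hz0.le), mul_div_cancel₀ _ hz0.ne']
    _ ≤ z ^ β * (x / z) ^ (s / 2) := by
        gcongr
        exact (one_le_div hz0).2 hzx
    _ = z ^ β * √(x / z) ^ s := by
        rw [rpow_div_two_eq_sqrt _ (div_nonneg (hz0.le.trans hzx) hz0.le)]
    _ ≤ z ^ β * wReal z x ^ s := by gcongr

lemma one_add_sub_rpow_le_rpow_mul_wReal_rpow (hβ : 0 ≤ β) (hβs : 2 * β ≤ s) (hx : 1 ≤ x)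
    (hxy : x ≤ y) : (1 + (y - x)) ^ β ≤ x ^ β * wReal x y ^ s := by
  have hx0 : 0 < x := zero_lt_one.trans_le hx
  calc (1 + (y - x)) ^ β ≤ (1 + (y - x)) ^ (2 * β) :=
        rpow_le_rpow_of_exponent_le (by linarith) (by linarith)
    _ ≤ (√x * wReal x y) ^ (2 * β) := by
        rw [sqrt_mul_wReal hx0 hxy]
        gcongr
        exact one_le_sqrt.2 hx
    _ = x ^ β * wReal x y ^ (2 * β) := by
        rw [mul_rpow (sqrt_nonneg x) (wReal_nonneg x y), rpow_mul (sqrt_nonneg x), rpow_two,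
          sq_sqrt hx0.le]
    _ ≤ x ^ β * wReal x y ^ s := by
        gcongr
        exact one_le_wReal hx0 hxy

lemma weightPlus_comm (s β x y : ℝ) : weightPlus s β x y = weightPlus s β y x := by
  rw [weightPlus, weightPlus, min_comm, wReal_comm, abs_sub_comm]

lemma weightPlus_of_le (hxy : x ≤ y) :
    weightPlus s β x y = x ^ β * wReal x y ^ s * (1 + (y - x)) := by
  rw [weightPlus, min_eq_left hxy, abs_sub_comm, abs_of_nonneg (sub_nonneg.2 hxy)]

lemma weightPlus_pos (hx : 0 < x) (hy : 0 < y) : 0 < weightPlus s β x y := by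
  have hw : 0 < wReal x y := by
    rcases le_total x y with h | h
    · exact zero_lt_one.trans_le (one_le_wReal hx h)
    · exact wReal_comm x y ▸ zero_lt_one.trans_le (one_le_wReal hy h)
  unfold weightPlus
  positivity

lemma weightPlus_le_of_le_left (hs : 0 ≤ s) (hβ : 0 ≤ β) (hβs : β ≤ s / 2) (hz : 1 ≤ z)
    (hzx : z ≤ x) (hxy : x ≤ y) :
    weightPlus s β x y ≤ (z ^ β * (1 + (x - z)))⁻¹ * (weightPlus s β x z * weightPlus s β z y) := by
  have hz0 : 0 < z := zero_lt_one.trans_le hz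
  rw [inv_mul_eq_div, le_div_iff₀ (by have := sub_nonneg.2 hzx; positivity),
    weightPlus_of_le hxy, weightPlus_comm s β x, weightPlus_of_le hzx,
    weightPlus_of_le (hzx.trans hxy)]
  calc x ^ β * wReal x y ^ s * (1 + (y - x)) * (z ^ β * (1 + (x - z)))
      ≤ z ^ β * wReal z x ^ s * wReal z y ^ s * (1 + (y - z)) * (z ^ β * (1 + (x - z))) := by
        have := rpow_le_rpow_mul_wReal_rpow hβ hβs hz hzx
        have := wReal_le_wReal_of_le_left hz0 hzx hxy
        have := wReal_nonneg x y
        have := wReal_nonneg z x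
        gcongr
        all_goals bound
    _ = z ^ β * wReal z x ^ s * (1 + (x - z)) * (z ^ β * wReal z y ^ s * (1 + (y - z))) := by ring

lemma weightPlus_le_of_mem_Icc (hs : 0 ≤ s) (hx : 1 ≤ x) (hxz : x ≤ z) (hzy : z ≤ y) :
    weightPlus s β x y ≤ ((z ^ β * (1 + (z - x)))⁻¹ + (z ^ β * (1 + (y - z)))⁻¹) *
      (weightPlus s β x z * weightPlus s β z y) := by
  have hx0 : 0 < x := zero_lt_one.trans_le hx
  have hz0 : 0 < z := hx0.trans_le hxz
  have hzx := sub_nonneg.2 hxz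
  have hyz := sub_nonneg.2 hzy
  rw [weightPlus_of_le (hxz.trans hzy), weightPlus_of_le hxz, weightPlus_of_le hzy]
  calc x ^ β * wReal x y ^ s * (1 + (y - x))
      ≤ x ^ β * (wReal x z * wReal z y) ^ s * ((1 + (z - x)) + (1 + (y - z))) := by
        have := wReal_le_mul hx hxz hzy
        have : 1 + (y - x) ≤ (1 + (z - x)) + (1 + (y - z)) := by linarith
        have := wReal_nonneg x y
        have := mul_nonneg (wReal_nonneg x z) (wReal_nonneg z y)
        gcongr x ^ β * ?_ ^ s * ?_
        all_goals bound
    _ = ((z ^ β * (1 + (z - x)))⁻¹ + (z ^ β * (1 + (y - z)))⁻¹) *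
          (x ^ β * wReal x z ^ s * (1 + (z - x)) * (z ^ β * wReal z y ^ s * (1 + (y - z)))) := by
        rw [mul_rpow (wReal_nonneg x z) (wReal_nonneg z y)]
        field_simp
        ring

lemma weightPlus_le_of_le_right (hβ : 0 ≤ β) (hβs : 2 * β ≤ s) (hx : 1 ≤ x) (hxy : x ≤ y)
    (hyz : y ≤ z) :
    weightPlus s β x y ≤
      (1 + (z - y)) ^ (-(1 + β)) * (weightPlus s β x z * weightPlus s β z y) := by
  have hx0 : 0 < x := zero_lt_one.trans_le hx
  have hzy : 0 < 1 + (z - y) := by linarith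
  have hxy_le_xz : weightPlus s β x y ≤ weightPlus s β x z := by
    rw [weightPlus_of_le hxy, weightPlus_of_le (hxy.trans hyz)]
    have := wReal_le_wReal_of_le_right hx0 hxy hyz
    have := wReal_nonneg x y
    gcongr
    all_goals bound
  have hdecay : (1 + (z - y)) ^ (1 + β) ≤ weightPlus s β z y := by
    rw [weightPlus_comm, weightPlus_of_le hyz, rpow_add hzy, rpow_one, mul_comm]
    gcongr
    exact one_add_sub_rpow_le_rpow_mul_wReal_rpow hβ hβs (hx.trans hxy) hyz
  rw [rpow_neg hzy.le, inv_mul_eq_div, le_div_iff₀ (by positivity)]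
  calc weightPlus s β x y * (1 + (z - y)) ^ (1 + β)
      ≤ weightPlus s β x z * weightPlus s β z y :=
        mul_le_mul hxy_le_xz hdecay (by positivity) (weightPlus_pos hx0 (by linarith)).le

lemma inv_rpow_mul_le_min_rpow_neg (hβ : 0 ≤ β) (hx : 0 < x) (hy : 0 < y) :
    (x ^ β * y)⁻¹ ≤ min x y ^ (-(1 + β)) := by
  have hm : 0 < min x y := lt_min hx hy
  rw [rpow_neg hm.le]
  refine inv_anti₀ (by positivity) ?_
  rw [add_comm, rpow_add_one hm.ne']
  gcongr
  exacts [min_le_left x y, min_le_right x y]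

lemma min_rpow_le_add_rpow (p : ℝ) (hx : 0 ≤ x) (hy : 0 ≤ y) :
    min x y ^ p ≤ x ^ p + y ^ p := by
  rcases min_choice x y with h | h <;> rw [h]
  · exact le_add_of_nonneg_right (rpow_nonneg hy p)
  · exact le_add_of_nonneg_left (rpow_nonneg hx p)

lemma inv_rpow_mul_le_add (hβ : 0 ≤ β) (hx : 0 < x) (hy : 0 < y) :
    (x ^ β * y)⁻¹ ≤ x ^ (-(1 + β)) + y ^ (-(1 + β)) :=
  (inv_rpow_mul_le_min_rpow_neg hβ hx hy).trans (min_rpow_le_add_rpow _ hx.le hy.le)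

end Weight

noncomputable def decay (β x : ℝ) : ℝ := (1 + |x|) ^ (-(1 + β))

noncomputable def kernel (β x y z : ℝ) : ℝ := z ^ (-(1 + β)) + decay β (x - z) + decay β (y - z)

lemma decay_nonneg (β x : ℝ) : 0 ≤ decay β x :=
  rpow_nonneg (by positivity) _

lemma decay_of_nonneg {β x : ℝ} (hx : 0 ≤ x) : decay β x = (1 + x) ^ (-(1 + β)) := by
  rw [decay, abs_of_nonneg hx]

lemma decay_sub_comm (β x y : ℝ) : decay β (x - y) = decay β (y - x) := by
  rw [decay, decay, abs_sub_comm]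

lemma kernel_comm (β x y z : ℝ) : kernel β x y z = kernel β y x z := by
  rw [kernel, kernel, add_right_comm]

section Kernel

variable {s β x y z : ℝ}

lemma weightPlus_le_kernel_mul_of_le (hs : 0 ≤ s) (hβ : 0 ≤ β) (hβs : β ≤ s / 2) (hx : 1 ≤ x)
    (hxy : x ≤ y) (hz : 1 ≤ z) :
    weightPlus s β x y ≤ kernel β x y z * (weightPlus s β x z * weightPlus s β z y) := by
  have hz0 : 0 < z := zero_lt_one.trans_le hz
  have hW : 0 ≤ weightPlus s β x z * weightPlus s β z y :=
    (mul_pos (weightPlus_pos (by linarith) hz0) (weightPlus_pos hz0 (by linarith))).le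
  have hzpow : 0 ≤ z ^ (-(1 + β)) := rpow_nonneg hz0.le _
  have hdx := decay_nonneg β (x - z)
  have hdy := decay_nonneg β (y - z)
  rcases le_total z x with hzx | hxz
  · refine (weightPlus_le_of_le_left hs hβ hβs hz hzx hxy).trans
      (mul_le_mul_of_nonneg_right ?_ hW)
    have h := inv_rpow_mul_le_add hβ hz0 (by linarith : 0 < 1 + (x - z))
    rw [kernel, decay_of_nonneg (sub_nonneg.2 hzx)]
    linarith
  rcases le_total z y with hzy | hyz
  · refine (weightPlus_le_of_mem_Icc hs hx hxz hzy).trans (mul_le_mul_of_nonneg_right ?_ hW)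
    have h₁ := inv_rpow_mul_le_min_rpow_neg hβ hz0 (by linarith : 0 < 1 + (z - x))
    have h₂ := inv_rpow_mul_le_add hβ hz0 (by linarith : 0 < 1 + (y - z))
    rw [min_eq_right (by linarith)] at h₁
    rw [kernel, decay_sub_comm, decay_of_nonneg (sub_nonneg.2 hxz),
      decay_of_nonneg (sub_nonneg.2 hzy)]
    linarith
  · refine (weightPlus_le_of_le_right hβ (by linarith) hx hxy hyz).trans
      (mul_le_mul_of_nonneg_right ?_ hW)
    rw [kernel, decay_sub_comm β y, decay_of_nonneg (sub_nonneg.2 hyz)]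
    linarith

lemma weightPlus_le_kernel_mul (hs : 0 ≤ s) (hβ : 0 ≤ β) (hβs : β ≤ s / 2) (hx : 1 ≤ x)
    (hy : 1 ≤ y) (hz : 1 ≤ z) :
    weightPlus s β x y ≤ kernel β x y z * (weightPlus s β x z * weightPlus s β z y) := by
  rcases le_total x y with hxy | hyx
  · exact weightPlus_le_kernel_mul_of_le hs hβ hβs hx hxy hz
  · rw [weightPlus_comm, kernel_comm, weightPlus_comm s β x z, weightPlus_comm s β z y,
      mul_comm (weightPlus s β z x)]
    exact weightPlus_le_kernel_mul_of_le hs hβ hβs hy hyx hz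

end Kernel

section Sums

variable {β : ℝ}

open Set in
lemma tsum_nat_add_two_rpow_neg_le (hβ : 0 < β) :
    ∑' n : ℕ, ((n : ℝ) + 2) ^ (-(1 + β)) ≤ 1 / β := by
  have hexp : -(1 + β) < -1 := by linarith
  have anti : AntitoneOn (fun x : ℝ => x ^ (-(1 + β))) (Ici ((1 : ℕ) : ℝ)) :=
    (antitoneOn_rpow_Ioi_of_exponent_nonpos (by linarith)).mono
      (fun x hx => zero_lt_one.trans_le (by simpa using hx))
  have h := anti.tsum_comp_add_le_integral 1
    (by simpa using integrableOn_Ioi_rpow_of_lt hexp one_pos)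
    (fun t ht => rpow_nonneg (by simp at ht; linarith) _)
  simp only [Nat.cast_one, integral_Ioi_rpow_of_lt hexp one_pos, one_rpow] at h
  rw [show -(1 + β) + 1 = -β by ring, neg_div_neg_eq] at h
  convert h using 3 with n
  push_cast
  ring_nf

lemma summable_nat_add_one_rpow_neg (hβ : 0 < β) :
    Summable fun n : ℕ => ((n : ℝ) + 1) ^ (-(1 + β)) := by
  simpa using (summable_nat_add_iff 1).2 (summable_nat_rpow.2 (by linarith : -(1 + β) < -1))

lemma tsum_nat_add_one_rpow_neg_le (hβ : 0 < β) :
    ∑' n : ℕ, ((n : ℝ) + 1) ^ (-(1 + β)) ≤ 1 + 1 / β := by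
  rw [(summable_nat_add_one_rpow_neg hβ).tsum_eq_zero_add]
  simp only [Nat.cast_zero, zero_add, one_rpow, Nat.cast_add, Nat.cast_one, add_assoc,
    one_add_one_eq_two]
  linarith [tsum_nat_add_two_rpow_neg_le hβ]

lemma summable_pnat_rpow_neg (hβ : 0 < β) : Summable fun k : ℕ+ => (k : ℝ) ^ (-(1 + β)) :=
  (summable_pnat_iff_summable_succ (f := fun n : ℕ => (n : ℝ) ^ (-(1 + β)))).2
    (by simpa using summable_nat_add_one_rpow_neg hβ)

lemma tsum_pnat_rpow_neg_le (hβ : 0 < β) : ∑' k : ℕ+, (k : ℝ) ^ (-(1 + β)) ≤ 1 + 1 / β := by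
  rw [tsum_pnat_eq_tsum_succ (f := fun n : ℕ => (n : ℝ) ^ (-(1 + β)))]
  simpa using tsum_nat_add_one_rpow_neg_le hβ

lemma decay_natCast (β : ℝ) (n : ℕ) : decay β n = ((n : ℝ) + 1) ^ (-(1 + β)) := by
  rw [decay_of_nonneg n.cast_nonneg, add_comm]

lemma decay_neg (β x : ℝ) : decay β (-x) = decay β x := by
  rw [decay, decay, abs_neg]

lemma decay_intCast_nat (β : ℝ) (n : ℕ) : decay β ((n : ℤ) : ℝ) = ((n : ℝ) + 1) ^ (-(1 + β)) := by
  rw [Int.cast_natCast, decay_natCast]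

-- The cast is written as `Int.cast` because `((-(n + 1) : ℤ) : ℝ)` would elaborate with the cast
-- pushed inside, which no longer matches `tsum_of_nat_of_neg_add_one`.
lemma decay_intCast_neg_add_one (β : ℝ) (n : ℕ) :
    decay β (Int.cast (-((n : ℤ) + 1))) = ((n : ℝ) + 2) ^ (-(1 + β)) := by
  rw [Int.cast_neg, decay_neg, ← Nat.cast_succ, Int.cast_natCast, decay_natCast]
  push_cast
  ring_nf

lemma summable_nat_add_two_rpow_neg (hβ : 0 < β) :
    Summable fun n : ℕ => ((n : ℝ) + 2) ^ (-(1 + β)) := by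
  have h := (summable_nat_add_iff 1).2 (summable_nat_add_one_rpow_neg hβ)
  push_cast at h
  simpa only [add_assoc, one_add_one_eq_two] using h

lemma summable_decay_int (hβ : 0 < β) : Summable fun m : ℤ => decay β m :=
  .of_nat_of_neg_add_one (by simpa only [decay_intCast_nat] using summable_nat_add_one_rpow_neg hβ)
    (by simpa only [decay_intCast_neg_add_one] using summable_nat_add_two_rpow_neg hβ)

lemma tsum_decay_int_le (hβ : 0 < β) : ∑' m : ℤ, decay β m ≤ 1 + 2 / β := by
  rw [tsum_of_nat_of_neg_add_one
    (by simpa only [decay_intCast_nat] using summable_nat_add_one_rpow_neg hβ)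
    (by simpa only [decay_intCast_neg_add_one] using summable_nat_add_two_rpow_neg hβ)]
  simp only [decay_intCast_nat, decay_intCast_neg_add_one]
  have : 2 / β = 1 / β + 1 / β := by ring
  linarith [tsum_nat_add_one_rpow_neg_le hβ, tsum_nat_add_two_rpow_neg_le hβ]

lemma pnat_sub_injective (n : ℕ+) : Function.Injective fun k : ℕ+ => (n : ℤ) - k :=
  (sub_right_injective).comp (Nat.cast_injective.comp PNat.coe_injective)

lemma summable_decay_sub_pnat (hβ : 0 < β) (n : ℕ+) :
    Summable fun k : ℕ+ => decay β ((n : ℝ) - k) := by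
  simpa [Function.comp_def] using (summable_decay_int hβ).comp_injective (pnat_sub_injective n)

lemma tsum_decay_sub_pnat_le (hβ : 0 < β) (n : ℕ+) :
    ∑' k : ℕ+, decay β ((n : ℝ) - k) ≤ 1 + 2 / β := by
  have h := tsum_comp_le_tsum_of_inj (summable_decay_int hβ) (fun m => decay_nonneg β m)
    (pnat_sub_injective n)
  simpa [Function.comp_def] using h.trans (tsum_decay_int_le hβ)

lemma summable_kernel (hβ : 0 < β) (i j : ℕ+) : Summable fun k : ℕ+ => kernel β i j k :=
  ((summable_pnat_rpow_neg hβ).add (summable_decay_sub_pnat hβ i)).add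
    (summable_decay_sub_pnat hβ j)

lemma tsum_kernel_le (hβ : 0 < β) (i j : ℕ+) : ∑' k : ℕ+, kernel β i j k ≤ 3 + 5 / β := by
  simp only [kernel]
  rw [Summable.tsum_add ((summable_pnat_rpow_neg hβ).add (summable_decay_sub_pnat hβ i))
      (summable_decay_sub_pnat hβ j),
    Summable.tsum_add (summable_pnat_rpow_neg hβ) (summable_decay_sub_pnat hβ i)]
  have : 5 / β = 1 / β + 2 / β + 2 / β := by ring
  linarith [tsum_pnat_rpow_neg_le hβ, tsum_decay_sub_pnat_le hβ i, tsum_decay_sub_pnat_le hβ j]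

end Sums

lemma three_add_five_div_le {s β : ℝ} (hβ : 0 < β) (hβ1 : β ≤ 1) (hs : 0 ≤ s) :
    3 + 5 / β ≤ 2 ^ (s / 2 + 3) / β := by
  have h8 : (8 : ℝ) ≤ 2 ^ (s / 2 + 3) := by
    calc (8 : ℝ) = 2 ^ (3 : ℝ) := by norm_num
      _ ≤ 2 ^ (s / 2 + 3) := rpow_le_rpow_of_exponent_le one_le_two (by linarith)
  rw [le_div_iff₀ hβ, add_mul, div_mul_cancel₀ _ hβ.ne']
  linarith

section BlockProduct

variable {𝕜 ι : Type*} [NontriviallyNormedField 𝕜] {E : ι → Type*}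
  [∀ i, SeminormedAddCommGroup (E i)] [∀ i, NormedSpace 𝕜 (E i)]
  {W : ι → ι → ℝ} {K : ι → ι → ι → ℝ} {C MA MB : ℝ} (A B : ∀ i j, E j →L[𝕜] E i)

lemma weight_mul_norm_comp_le (hW : ∀ i j, 0 < W i j)
    (hK : ∀ i j k, W i j ≤ K i j k * (W i k * W k j)) (hA : ∀ i j, W i j * ‖A i j‖ ≤ MA)
    (hB : ∀ i j, W i j * ‖B i j‖ ≤ MB) (i j k : ι) :
    W i j * ‖(A i k).comp (B k j)‖ ≤ K i j k * (MA * MB) := by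
  have hWW : 0 < W i k * W k j := mul_pos (hW i k) (hW k j)
  have hK0 : 0 ≤ K i j k := (pos_of_mul_pos_left ((hW i j).trans_le (hK i j k)) hWW.le).le
  have hMA : 0 ≤ MA := (mul_nonneg (hW i k).le (norm_nonneg _)).trans (hA i k)
  calc W i j * ‖(A i k).comp (B k j)‖ ≤ K i j k * (W i k * W k j) * (‖A i k‖ * ‖B k j‖) :=
        mul_le_mul (hK i j k) ((A i k).opNorm_comp_le (B k j)) (norm_nonneg _)
          (mul_nonneg hK0 hWW.le)
    _ = K i j k * ((W i k * ‖A i k‖) * (W k j * ‖B k j‖)) := by ring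
    _ ≤ K i j k * (MA * MB) :=
        mul_le_mul_of_nonneg_left (mul_le_mul (hA i k) (hB k j)
          (mul_nonneg (hW k j).le (norm_nonneg _)) hMA) hK0

lemma summable_norm_comp (hW : ∀ i j, 0 < W i j)
    (hK : ∀ i j k, W i j ≤ K i j k * (W i k * W k j)) (hKs : ∀ i j, Summable (K i j))
    (hA : ∀ i j, W i j * ‖A i j‖ ≤ MA) (hB : ∀ i j, W i j * ‖B i j‖ ≤ MB) (i j : ι) :
    Summable fun k => ‖(A i k).comp (B k j)‖ := by
  refine .of_nonneg_of_le (fun k => norm_nonneg _) (fun k => ?_)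
    (((hKs i j).mul_right (MA * MB)).div_const (W i j))
  rw [le_div_iff₀' (hW i j)]
  exact weight_mul_norm_comp_le A B hW hK hA hB i j k

lemma weight_mul_norm_tsum_comp_le (hW : ∀ i j, 0 < W i j)
    (hK : ∀ i j k, W i j ≤ K i j k * (W i k * W k j)) (hKs : ∀ i j, Summable (K i j))
    (hKC : ∀ i j, ∑' k, K i j k ≤ C) (hA : ∀ i j, W i j * ‖A i j‖ ≤ MA)
    (hB : ∀ i j, W i j * ‖B i j‖ ≤ MB) (i j : ι) :
    W i j * ‖∑' k, (A i k).comp (B k j)‖ ≤ C * MA * MB := by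
  have hs := summable_norm_comp A B hW hK hKs hA hB i j
  have hMM : 0 ≤ MA * MB := by
    have hMA := (mul_nonneg (hW i i).le (norm_nonneg _)).trans (hA i i)
    have hMB := (mul_nonneg (hW i i).le (norm_nonneg _)).trans (hB i i)
    positivity
  calc W i j * ‖∑' k, (A i k).comp (B k j)‖ ≤ W i j * ∑' k, ‖(A i k).comp (B k j)‖ :=
        mul_le_mul_of_nonneg_left (norm_tsum_le_tsum_norm hs) (hW i j).le
    _ = ∑' k, W i j * ‖(A i k).comp (B k j)‖ := tsum_mul_left.symm
    _ ≤ ∑' k, K i j k * (MA * MB) :=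
        (hs.mul_left _).tsum_le_tsum (weight_mul_norm_comp_le A B hW hK hA hB i j)
          ((hKs i j).mul_right _)
    _ = (∑' k, K i j k) * (MA * MB) := tsum_mul_right
    _ ≤ C * MA * MB := by rw [mul_assoc]; exact mul_le_mul_of_nonneg_right (hKC i j) hMM

end BlockProduct

lemma cast_min_pnat (i j : ℕ+) : ((min i j : ℕ+) : ℝ) = min (i : ℝ) (j : ℝ) :=
  (show Monotone fun k : ℕ+ => (k : ℝ) from fun _ _ h => Nat.cast_le.2 h).map_min

lemma weightPlus_pnat (s β : ℝ) (i j : ℕ+) :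
    weightPlus s β i j = ((min i j : ℕ+) : ℝ) ^ β * w i j ^ s * (1 + |(i : ℝ) - (j : ℝ)|) := by
  rw [cast_min_pnat]
  rfl

end BlockMatrix

open BlockMatrix

theorem product_Msβplus_Msβplus_mem_Msβplus_general (s β : ℝ) (hβ : 0 < β)
    (hβs : β ≤ min (s / 2) 1) (d : ℕ+ → ℕ+)
    (A B : ∀ i j : ℕ+,
      EuclideanSpace ℂ (Fin (dim d j)) →L[ℂ] EuclideanSpace ℂ (Fin (dim d i)))
    (MA MB : ℝ)
    (hA : ∀ i j : ℕ+, ((min i j : ℕ+) : ℝ) ^ β * w i j ^ s * (1 + |(i : ℝ) - (j : ℝ)|) *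
      ‖A i j‖ ≤ MA)
    (hB : ∀ i j : ℕ+, ((min i j : ℕ+) : ℝ) ^ β * w i j ^ s * (1 + |(i : ℝ) - (j : ℝ)|) *
      ‖B i j‖ ≤ MB) :
    (∀ i j : ℕ+, Summable fun k : ℕ+ => ‖(A i k).comp (B k j)‖) ∧
    (∀ i j : ℕ+, Summable fun k : ℕ+ => ‖(B i k).comp (A k j)‖) ∧
    (∀ i j : ℕ+, ((min i j : ℕ+) : ℝ) ^ β * w i j ^ s * (1 + |(i : ℝ) - (j : ℝ)|) *
      ‖∑' k : ℕ+, (A i k).comp (B k j)‖ ≤ 2 ^ (s / 2 + 3) / β * MA * MB) ∧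
    (∀ i j : ℕ+, ((min i j : ℕ+) : ℝ) ^ β * w i j ^ s * (1 + |(i : ℝ) - (j : ℝ)|) *
      ‖∑' k : ℕ+, (B i k).comp (A k j)‖ ≤ 2 ^ (s / 2 + 3) / β * MA * MB) := by
  have hβs' : β ≤ s / 2 := hβs.trans (min_le_left _ _)
  have hβ1 : β ≤ 1 := hβs.trans (min_le_right _ _)
  let W : ℕ+ → ℕ+ → ℝ := fun i j => weightPlus s β i j
  have hW (i j : ℕ+) : 0 < W i j := weightPlus_pos (by positivity) (by positivity)
  have hK (i j k : ℕ+) : W i j ≤ kernel β i j k * (W i k * W k j) :=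
    weightPlus_le_kernel_mul (by linarith) hβ.le hβs' (Nat.one_le_cast.2 i.pos)
      (Nat.one_le_cast.2 j.pos) (Nat.one_le_cast.2 k.pos)
  have hC (i j : ℕ+) : ∑' k : ℕ+, kernel β i j k ≤ 2 ^ (s / 2 + 3) / β :=
    (tsum_kernel_le hβ i j).trans (three_add_five_div_le hβ hβ1 (by linarith))
  simp only [← weightPlus_pnat] at hA hB ⊢
  refine ⟨summable_norm_comp A B hW hK (summable_kernel hβ) hA hB,
    summable_norm_comp B A hW hK (summable_kernel hβ) hB hA,
    weight_mul_norm_tsum_comp_le A B hW hK (summable_kernel hβ) hC hA hB, fun i j => ?_⟩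
  rw [mul_right_comm]
  exact weight_mul_norm_tsum_comp_le B A hW hK (summable_kernel hβ) hC hB hA i j

/-- Let `s > 0`, `0 < β ≤ min{s/2, 1}`, and let `A, B ∈ M_{s,β}^+` (i.e. their blocks satisfy
`(i∧j)^β w(i,j)^s (1+|i−j|) ‖A_i^j‖ ≤ |A|_{s,β+} = MA`, similarly for `B`).  Blocks are viewed
as (continuous linear) operators `ℂ^{2d_j} → ℂ^{2d_i}` with the `ℓ²`-operator norm.  Then the
blockwise products `(AB)_i^j = ∑_k A_i^k B_k^j` and `(BA)_i^j = ∑_k B_i^k A_k^j` converge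
absolutely in operator norm, and `AB, BA ∈ M_{s,β}^+` with
`|AB|_{s,β+}, |BA|_{s,β+} ≤ (2^{s/2+3}/β)·|A|_{s,β+}·|B|_{s,β+}`. -/
theorem product_Msβplus_Msβplus_mem_Msβplus (s β : ℝ) (hs : 0 < s) (hβ : 0 < β)
    (hβs : β ≤ min (s / 2) 1) (d : ℕ+ → ℕ+)
    (A B : ∀ i j : ℕ+,
      EuclideanSpace ℂ (Fin (dim d j)) →L[ℂ] EuclideanSpace ℂ (Fin (dim d i)))
    (MA MB : ℝ)
    (hA : ∀ i j : ℕ+, ((min i j : ℕ+) : ℝ) ^ β * w i j ^ s * (1 + |(i : ℝ) - (j : ℝ)|) *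
      ‖A i j‖ ≤ MA)
    (hB : ∀ i j : ℕ+, ((min i j : ℕ+) : ℝ) ^ β * w i j ^ s * (1 + |(i : ℝ) - (j : ℝ)|) *
      ‖B i j‖ ≤ MB) :
    (∀ i j : ℕ+, Summable fun k : ℕ+ => ‖(A i k).comp (B k j)‖) ∧
    (∀ i j : ℕ+, Summable fun k : ℕ+ => ‖(B i k).comp (A k j)‖) ∧
    (∀ i j : ℕ+, ((min i j : ℕ+) : ℝ) ^ β * w i j ^ s * (1 + |(i : ℝ) - (j : ℝ)|) *
      ‖∑' k : ℕ+, (A i k).comp (B k j)‖ ≤ 2 ^ (s / 2 + 3) / β * MA * MB) ∧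
    (∀ i j : ℕ+, ((min i j : ℕ+) : ℝ) ^ β * w i j ^ s * (1 + |(i : ℝ) - (j : ℝ)|) *
      ‖∑' k : ℕ+, (B i k).comp (A k j)‖ ≤ 2 ^ (s / 2 + 3) / β * MA * MB) :=
  product_Msβplus_Msβplus_mem_Msβplus_general s β hβ hβs d A B MA MB hA hB
end

section
/- Let s ≥ 0 and β ≥ 0, let η ∈ Y_{s+β} and ζ ∈ Y_s, and let A := η ⊗ ζ be the infinite block matrix whose (i,j)-block is the outer product A_i^j = η_i · (ζ_j)ᵀ (so that ‖A_i^j‖ = |η_i|·|ζ_j|). Then |A|_{s,β} ≤ ‖η‖_{s+β} · ‖ζ‖_s. -/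
lemma aux_sqrt_sq_rpow (x a c : ℝ) (hc : 1 ≤ c) (hx : 0 ≤ x) :
    Real.sqrt (x ^ 2 * c ^ (2 * a)) = x * c ^ a := by
  have hc0 : (0:ℝ) ≤ c := by linarith
  rw [Real.sqrt_mul (sq_nonneg x), Real.sqrt_sq hx,
    show 2 * a = a * 2 by ring, Real.rpow_mul hc0, Real.rpow_two,
    Real.sqrt_sq (Real.rpow_nonneg hc0 a)]

/-- Let `s ≥ 0`, `β ≥ 0`, `η ∈ Y_{s+β}` and `ζ ∈ Y_s`, and let `A = η ⊗ ζ` be the outer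
product block matrix, whose blocks satisfy `‖A_i^j‖ = |η_i|·|ζ_j|`.  Then
`A ∈ M_{s,β}` with `|A|_{s,β} ≤ ‖η‖_{s+β}·‖ζ‖_s`, i.e. every block satisfies
`(i∧j)^β w(i,j)^s ‖A_i^j‖ ≤ ‖η‖_{s+β}·‖ζ‖_s`. -/
theorem outer_product_mem_Msβ (s β : ℝ) (hs : 0 ≤ s) (hβ : 0 ≤ β) (d : ℕ+ → ℕ+)
    (η ζ : ∀ j : ℕ+, EuclideanSpace ℂ (Fin (dim d j)))
    (hη : Summable fun j : ℕ+ => ‖η j‖ ^ 2 * (j : ℝ) ^ (2 * (s + β)))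
    (hζ : Summable fun j : ℕ+ => ‖ζ j‖ ^ 2 * (j : ℝ) ^ (2 * s))
    (A : ∀ i j : ℕ+,
      EuclideanSpace ℂ (Fin (dim d j)) →L[ℂ] EuclideanSpace ℂ (Fin (dim d i)))
    (hA : ∀ i j : ℕ+, ‖A i j‖ = ‖η i‖ * ‖ζ j‖) :
    ∀ i j : ℕ+, ((min i j : ℕ+) : ℝ) ^ β * w i j ^ s * ‖A i j‖ ≤
      Real.sqrt (∑' j : ℕ+, ‖η j‖ ^ 2 * (j : ℝ) ^ (2 * (s + β))) *
        Real.sqrt (∑' j : ℕ+, ‖ζ j‖ ^ 2 * (j : ℝ) ^ (2 * s)) := by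
  intro i j
  have hi1 : (1:ℝ) ≤ (i:ℝ) := by exact_mod_cast i.one_le
  have hj1 : (1:ℝ) ≤ (j:ℝ) := by exact_mod_cast j.one_le
  have hi0 : (0:ℝ) ≤ (i:ℝ) := by linarith
  have hj0 : (0:ℝ) ≤ (j:ℝ) := by linarith
  -- m
  have hmcast : ((min i j : ℕ+) : ℝ) = min (i:ℝ) (j:ℝ) := by
    rcases le_total i j with h | h
    · simp [min_eq_left h, min_eq_left (show (i:ℝ) ≤ (j:ℝ) by exact_mod_cast h)]
    · simp [min_eq_right h, min_eq_right (show (j:ℝ) ≤ (i:ℝ) by exact_mod_cast h)]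
  set m : ℝ := min (i:ℝ) (j:ℝ) with hm
  have hm1 : 1 ≤ m := le_min hi1 hj1
  have hm0 : 0 ≤ m := by linarith
  have hsm : 1 ≤ Real.sqrt m := by
    rw [show (1:ℝ) = Real.sqrt 1 by simp]; exact Real.sqrt_le_sqrt hm1
  -- bound on w
  have hwle : w i j ≤ (i:ℝ) * (j:ℝ) := by
    have habs : |(i:ℝ) - (j:ℝ)| = max (i:ℝ) (j:ℝ) - m := by
      rcases le_total (i:ℝ) (j:ℝ) with h | h
      · rw [abs_sub_comm, abs_of_nonneg (by linarith), max_eq_right h, hm, min_eq_left h]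
      · rw [abs_of_nonneg (by linarith), max_eq_left h, hm, min_eq_right h]
    have hM : max (i:ℝ) (j:ℝ) ≤ (i:ℝ) * (j:ℝ) := by
      apply max_le
      · nlinarith
      · nlinarith
    rw [w, habs]
    rw [div_le_iff₀ (by positivity)]
    have h1 : max (i:ℝ) (j:ℝ) - m ≤ ((i:ℝ)*(j:ℝ) - 1) * Real.sqrt m := by
      have : max (i:ℝ) (j:ℝ) - m ≤ (i:ℝ)*(j:ℝ) - 1 := by
        have := hM; nlinarith [le_max_left (i:ℝ) (j:ℝ)]
      calc max (i:ℝ) (j:ℝ) - m ≤ (i:ℝ)*(j:ℝ) - 1 := this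
        _ ≤ ((i:ℝ)*(j:ℝ) - 1) * Real.sqrt m := by
            nlinarith [mul_nonneg (show (0:ℝ) ≤ (i:ℝ)*(j:ℝ) - 1 by nlinarith)
              (show (0:ℝ) ≤ Real.sqrt m - 1 by linarith)]
    nlinarith
  have hw0 : 0 ≤ w i j := by
    rw [w]; positivity
  -- key inequality on weights
  have hkey : m ^ β * w i j ^ s ≤ (i:ℝ) ^ (s + β) * (j:ℝ) ^ s := by
    have h1 : m ^ β ≤ (i:ℝ) ^ β :=
      Real.rpow_le_rpow hm0 (min_le_left _ _) hβ
    have h2 : w i j ^ s ≤ ((i:ℝ) * (j:ℝ)) ^ s :=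
      Real.rpow_le_rpow hw0 hwle hs
    calc m ^ β * w i j ^ s ≤ (i:ℝ) ^ β * ((i:ℝ)*(j:ℝ)) ^ s := by
          apply mul_le_mul h1 h2 (Real.rpow_nonneg hw0 s) (Real.rpow_nonneg hi0 β)
      _ = (i:ℝ) ^ (s + β) * (j:ℝ) ^ s := by
          rw [Real.mul_rpow hi0 hj0, Real.rpow_add (by linarith : (0:ℝ) < (i:ℝ))]
          ring
  -- bounds by the sums
  have key1 : ‖η i‖ * (i:ℝ) ^ (s + β) ≤
      Real.sqrt (∑' k : ℕ+, ‖η k‖ ^ 2 * (k : ℝ) ^ (2 * (s + β))) := by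
    rw [← aux_sqrt_sq_rpow ‖η i‖ (s+β) (i:ℝ) hi1 (norm_nonneg _)]
    exact Real.sqrt_le_sqrt (Summable.le_tsum hη i fun k _ => by positivity)
  have key2 : ‖ζ j‖ * (j:ℝ) ^ s ≤
      Real.sqrt (∑' k : ℕ+, ‖ζ k‖ ^ 2 * (k : ℝ) ^ (2 * s)) := by
    rw [← aux_sqrt_sq_rpow ‖ζ j‖ s (j:ℝ) hj1 (norm_nonneg _)]
    exact Real.sqrt_le_sqrt (Summable.le_tsum hζ j fun k _ => by positivity)
  rw [hmcast, hA]
  calc m ^ β * w i j ^ s * (‖η i‖ * ‖ζ j‖)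
      ≤ ((i:ℝ) ^ (s + β) * (j:ℝ) ^ s) * (‖η i‖ * ‖ζ j‖) := by
        apply mul_le_mul_of_nonneg_right hkey (by positivity)
    _ = (‖η i‖ * (i:ℝ) ^ (s + β)) * (‖ζ j‖ * (j:ℝ) ^ s) := by ring
    _ ≤ Real.sqrt (∑' k : ℕ+, ‖η k‖ ^ 2 * (k : ℝ) ^ (2 * (s + β))) *
        Real.sqrt (∑' k : ℕ+, ‖ζ k‖ ^ 2 * (k : ℝ) ^ (2 * s)) := by
        apply mul_le_mul key1 key2 (by positivity) (Real.sqrt_nonneg _)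
end

section
/- Let n be a positive integer, b₁ > 0, and M, L > 0. Then there exists a constant C > 0, depending only on n, b₁, M and L, with the following property. Let D ⊂ ℝⁿ be a compact set and let ω : D → ℝⁿ be an injective map with image Δ = ω(D) such that sup_{x∈Δ} |x|_∞ ≤ M and such that the inverse map ω^{−1} : Δ → D is Lipschitz with Lipschitz constant at most L (with respect to the sup-norm on ℝⁿ). Then for every k ∈ ℤⁿ with k ≠ 0 and every κ with 0 < κ < b₁/3, the Lebesgue measure of the set ⋃_{i,j≥1} { ρ ∈ D : |⟨k, ω(ρ)⟩ + b₁·(j − i)| < κ·(1+|i−j|) } (the union over all pairs of positive integers i, j) is at most C·|k|₁·κ, where |k|₁ = ∑_{b=1}^n |k_b| and ⟨·,·⟩ is the standard inner product on ℝⁿ. -/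
open MeasureTheory

open Matrix ENNReal NNReal


lemma slab_vol (n : ℕ) (hn : 0 < n) (M : ℝ) (hM : 0 < M) (k : Fin n → ℤ) (hk : k ≠ 0)
    (c ε : ℝ) (hε : 0 < ε) :
    volume {y : Fin n → ℝ | |(∑ b, (k b : ℝ) * y b) + c| < ε ∧ ∀ b, |y b| ≤ M} ≤
      ENNReal.ofReal ((2*M)^(n-1) * (2*ε) * ((n : ℝ) / ∑ b, |(k b : ℝ)|)) := by
  classical
  obtain ⟨b₀, -, hb₀⟩ := Finset.exists_max_image Finset.univ (fun b => |k b|)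
    ⟨⟨0, hn⟩, Finset.mem_univ _⟩
  have hkb₀ : k b₀ ≠ 0 := by
    intro h
    apply hk
    funext b
    have := hb₀ b (Finset.mem_univ b)
    rw [h] at this
    simpa using this
  set K : ℝ := ∑ b, |(k b : ℝ)| with hK
  have hKpos : 0 < K := by
    rw [hK]
    apply Finset.sum_pos' (fun b _ => abs_nonneg _)
    exact ⟨b₀, Finset.mem_univ _, by positivity⟩
  have hKle : K ≤ (n : ℝ) * |(k b₀ : ℝ)| := by
    rw [hK]
    calc ∑ b, |(k b : ℝ)| ≤ ∑ _b : Fin n, |(k b₀ : ℝ)| := by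
          apply Finset.sum_le_sum
          intro b _
          have := hb₀ b (Finset.mem_univ b)
          exact_mod_cast (by exact_mod_cast this : (|k b| : ℝ) ≤ (|k b₀| : ℝ))
      _ = (n : ℝ) * |(k b₀ : ℝ)| := by simp [Finset.sum_const, mul_comm]
  set A : Matrix (Fin n) (Fin n) ℝ := Matrix.updateRow 1 b₀ (fun b => (k b : ℝ)) with hAdef
  have hdet : A.det = (k b₀ : ℝ) := by
    have h1 : A = (Matrix.updateCol (1 : Matrix (Fin n) (Fin n) ℝ) b₀
        (fun b => (k b : ℝ)))ᵀ := by
      ext i j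
      rw [hAdef]
      by_cases h : i = b₀
      · simp [h, Matrix.updateRow_apply, Matrix.updateCol_apply]
      · simp [h, Matrix.updateRow_apply, Matrix.updateCol_apply, Matrix.one_apply, eq_comm]
    rw [h1, Matrix.det_transpose, ← Matrix.cramer_apply, Matrix.cramer_one]
    rfl
  set φ : (Fin n → ℝ) →ₗ[ℝ] (Fin n → ℝ) := Matrix.toLin' A with hφ
  have hφdet : LinearMap.det φ = (k b₀ : ℝ) := by
    rw [hφ, LinearMap.det_toLin', hdet]
  set I : Fin n → Set ℝ := fun b => if b = b₀ then Set.Ioo (-c-ε) (-c+ε) else Set.Icc (-M) M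
    with hI
  have hsub : {y : Fin n → ℝ | |(∑ b, (k b : ℝ) * y b) + c| < ε ∧ ∀ b, |y b| ≤ M} ⊆
      ⇑φ ⁻¹' (Set.univ.pi I) := by
    rintro y ⟨h1, h2⟩ b -
    have hφy : φ y = A.mulVec y := Matrix.toLin'_apply A y
    by_cases hb : b = b₀
    · subst hb
      have : φ y b = ∑ b', (k b' : ℝ) * y b' := by
        rw [hφy]
        simp [Matrix.mulVec, dotProduct, hAdef, Matrix.updateRow_self]
      rw [hI]
      simp only [if_pos rfl, this]
      have := abs_lt.1 h1
      constructor <;> linarith [this.1, this.2]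
    · have : φ y b = y b := by
        rw [hφy]
        have hrow : A.mulVec y b = (1 : Matrix (Fin n) (Fin n) ℝ).mulVec y b := by
          simp only [Matrix.mulVec, hAdef, Matrix.updateRow_ne hb]
        rw [hrow, Matrix.one_mulVec]
      rw [hI]
      simp only [if_neg hb, this, Set.mem_Icc]
      have := abs_le.1 (h2 b)
      exact ⟨this.1, this.2⟩
  calc volume {y : Fin n → ℝ | |(∑ b, (k b : ℝ) * y b) + c| < ε ∧ ∀ b, |y b| ≤ M}
      ≤ volume (⇑φ ⁻¹' (Set.univ.pi I)) := measure_mono hsub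
    _ = ENNReal.ofReal |(LinearMap.det φ)⁻¹| * volume (Set.univ.pi I) := by
        rw [Measure.addHaar_preimage_linearMap volume (by rw [hφdet]; exact_mod_cast hkb₀)]
    _ ≤ ENNReal.ofReal ((2*M)^(n-1) * (2*ε) * ((n : ℝ) / K)) := by
        rw [volume_pi_pi]
        have hvol : ∀ b, volume (I b) = ENNReal.ofReal (if b = b₀ then 2*ε else 2*M) := by
          intro b
          rw [hI]
          by_cases hb : b = b₀
          · simp only [if_pos hb, Real.volume_Ioo]
            congr 1
            ring
          · simp only [if_neg hb, Real.volume_Icc]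
            congr 1
            ring
        simp_rw [hvol]
        rw [← ENNReal.ofReal_prod_of_nonneg (fun b _ => by positivity),
          ← ENNReal.ofReal_mul (abs_nonneg _)]
        apply ENNReal.ofReal_le_ofReal
        have hprod : (∏ b : Fin n, if b = b₀ then 2*ε else 2*M) = (2*ε) * (2*M)^(n-1) := by
          rw [← Finset.mul_prod_erase Finset.univ _ (Finset.mem_univ b₀)]
          simp only [if_pos rfl]
          congr 1
          rw [Finset.prod_congr rfl (fun b hb => if_neg (Finset.ne_of_mem_erase hb)),
            Finset.prod_const, Finset.card_erase_of_mem (Finset.mem_univ b₀),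
            Finset.card_univ, Fintype.card_fin]
        rw [hprod, hφdet]
        have hinv : |((k b₀ : ℝ))⁻¹| ≤ (n : ℝ) / K := by
          have hkb₀pos : (0:ℝ) < |(k b₀ : ℝ)| := by positivity
          rw [abs_inv, le_div_iff₀ hKpos]
          calc |(k b₀:ℝ)|⁻¹ * K ≤ |(k b₀:ℝ)|⁻¹ * ((n:ℝ) * |(k b₀:ℝ)|) :=
                mul_le_mul_of_nonneg_left hKle (by positivity)
            _ = (n:ℝ) := by field_simp
        calc |((k b₀:ℝ))⁻¹| * ((2*ε) * (2*M)^(n-1))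
            ≤ ((n:ℝ)/K) * ((2*ε) * (2*M)^(n-1)) := by
              apply mul_le_mul_of_nonneg_right hinv (by positivity)
          _ = (2*M)^(n-1) * (2*ε) * ((n:ℝ)/K) := by ring


lemma preimage_vol_le (n : ℕ) (L : ℝ) (hL : 0 < L) (D : Set (Fin n → ℝ))
    (ω : (Fin n → ℝ) → (Fin n → ℝ)) (hinj : Set.InjOn ω D)
    (hlip : ∀ ρ₁ ∈ D, ∀ ρ₂ ∈ D, ‖ρ₁ - ρ₂‖ ≤ L * ‖ω ρ₁ - ω ρ₂‖)
    (S T : Set (Fin n → ℝ)) (hSD : S ⊆ D) (hST : ∀ ρ ∈ S, ω ρ ∈ T) :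
    volume S ≤ ENNReal.ofReal (L ^ n) * volume T := by
  have hvol : (μH[(n : ℝ)] : Measure (Fin n → ℝ)) = volume := by
    simpa using (hausdorffMeasure_pi_real (ι := Fin n))
  set f : (Fin n → ℝ) → (Fin n → ℝ) := Function.invFunOn ω D with hf
  have hleft : ∀ ρ ∈ D, f (ω ρ) = ρ := fun ρ hρ => hinj.leftInvOn_invFunOn hρ
  have hlipf : LipschitzOnWith L.toNNReal f (ω '' S) := by
    apply LipschitzOnWith.of_dist_le_mul
    rintro y₁ ⟨ρ₁, hρ₁, rfl⟩ y₂ ⟨ρ₂, hρ₂, rfl⟩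
    rw [hleft ρ₁ (hSD hρ₁), hleft ρ₂ (hSD hρ₂), dist_eq_norm, dist_eq_norm,
      Real.coe_toNNReal _ hL.le]
    exact hlip ρ₁ (hSD hρ₁) ρ₂ (hSD hρ₂)
  have hSsub : S ⊆ f '' (ω '' S) := by
    intro ρ hρ
    exact ⟨ω ρ, Set.mem_image_of_mem _ hρ, hleft ρ (hSD hρ)⟩
  have hpow : ((L.toNNReal : ℝ≥0∞)) ^ (n : ℝ) = ENNReal.ofReal (L ^ n) := by
    rw [ENNReal.rpow_natCast, ← ENNReal.coe_pow, ← Real.toNNReal_pow hL.le]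
    rfl
  calc volume S = μH[(n : ℝ)] S := by rw [hvol]
    _ ≤ μH[(n : ℝ)] (f '' (ω '' S)) := measure_mono hSsub
    _ ≤ ((L.toNNReal : ℝ≥0∞)) ^ (n : ℝ) * μH[(n : ℝ)] (ω '' S) :=
        hlipf.hausdorffMeasure_image_le (Nat.cast_nonneg n)
    _ ≤ ((L.toNNReal : ℝ≥0∞)) ^ (n : ℝ) * μH[(n : ℝ)] T := by
        gcongr
        exact Set.image_subset_iff.2 hST
    _ = ENNReal.ofReal (L ^ n) * volume T := by rw [hpow, hvol]

/-- Let `n ≥ 1`, `b₁ > 0`, `M, L > 0`.  There is a constant `C > 0` (depending only on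
`n, b₁, M, L`) such that: for every compact `D ⊂ ℝⁿ` and every injective map `ω : D → ℝⁿ`
whose image is bounded by `M` in sup-norm and whose inverse is `L`-Lipschitz (in sup-norm),
for every `k ∈ ℤⁿ \ {0}` and every `0 < κ < b₁/3`, the Lebesgue measure of
`⋃_{i,j≥1} {ρ ∈ D : |⟨k, ω(ρ)⟩ + b₁(j−i)| < κ(1+|i−j|)}` is at most `C·|k|₁·κ`. -/
theorem measure_resonance_union_le (n : ℕ) (hn : 0 < n) (b₁ M L : ℝ)
    (hb₁ : 0 < b₁) (hM : 0 < M) (hL : 0 < L) :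
    ∃ C > (0 : ℝ),
      ∀ (D : Set (Fin n → ℝ)), IsCompact D →
      ∀ ω : (Fin n → ℝ) → (Fin n → ℝ), Set.InjOn ω D →
      (∀ ρ ∈ D, ‖ω ρ‖ ≤ M) →
      (∀ ρ₁ ∈ D, ∀ ρ₂ ∈ D, ‖ρ₁ - ρ₂‖ ≤ L * ‖ω ρ₁ - ω ρ₂‖) →
      ∀ k : Fin n → ℤ, k ≠ 0 → ∀ κ : ℝ, 0 < κ → κ < b₁ / 3 →
      volume (⋃ (i : ℕ+) (j : ℕ+),
          {ρ ∈ D | |(∑ b, (k b : ℝ) * ω ρ b) + b₁ * ((j : ℝ) - (i : ℝ))| <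
            κ * (1 + |(i : ℝ) - (j : ℝ)|)}) ≤
        ENNReal.ofReal (C * (∑ b, |(k b : ℝ)|) * κ) := by
  classical
  obtain ⟨A, hAdef⟩ : ∃ A : ℝ, A = 3/2 + 3*M/(2*b₁) := ⟨_, rfl⟩
  have hA0 : (3:ℝ)/2 ≤ A := by
    rw [hAdef]
    have : 0 ≤ 3*M/(2*b₁) := by positivity
    linarith
  have hApos : 0 < A := lt_of_lt_of_le (by norm_num) hA0
  have hn' : (0:ℝ) < n := Nat.cast_pos.2 hn
  refine ⟨24 * A^2 * (n:ℝ) * L^n * (2*M)^(n-1), by positivity, ?_⟩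
  intro D hD ω hinj hbound hlip k hk κ hκ hκ3
  obtain ⟨K, hK⟩ : ∃ K : ℝ, K = ∑ b, |(k b : ℝ)| := ⟨_, rfl⟩
  rw [← hK]
  have hK1 : 1 ≤ K := by
    obtain ⟨b, hb⟩ := Function.ne_iff.1 hk
    calc (1:ℝ) ≤ |(k b : ℝ)| := by
          rw [← Int.cast_abs]
          exact_mod_cast Int.one_le_abs hb
      _ ≤ K := by
          rw [hK]
          exact Finset.single_le_sum (fun b _ => abs_nonneg ((k b : ℝ))) (Finset.mem_univ b)
  have hKpos : (0:ℝ) < K := lt_of_lt_of_le one_pos hK1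
  set N : ℕ := ⌈A*K⌉₊ with hN
  set Am : ℤ → Set (Fin n → ℝ) := fun m =>
    {ρ | ρ ∈ D ∧ |(∑ b, (k b : ℝ) * ω ρ b) + b₁ * (m:ℝ)| < κ * (1 + |(m:ℝ)|)} with hAmdef
  have hgbound : ∀ ρ ∈ D, |∑ b, (k b : ℝ) * ω ρ b| ≤ K * M := by
    intro ρ hρ
    calc |∑ b, (k b : ℝ) * ω ρ b| ≤ ∑ b, |(k b : ℝ) * ω ρ b| :=
          Finset.abs_sum_le_sum_abs _ _
      _ ≤ ∑ b, |(k b : ℝ)| * M := by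
          apply Finset.sum_le_sum
          intro b _
          rw [abs_mul]
          apply mul_le_mul_of_nonneg_left _ (abs_nonneg _)
          calc |ω ρ b| = ‖ω ρ b‖ := (Real.norm_eq_abs _).symm
            _ ≤ ‖ω ρ‖ := norm_le_pi_norm (ω ρ) b
            _ ≤ M := hbound ρ hρ
      _ = K * M := by rw [← Finset.sum_mul, ← hK]
  have hsub : (⋃ (i : ℕ+) (j : ℕ+),
      {ρ ∈ D | |(∑ b, (k b : ℝ) * ω ρ b) + b₁ * ((j : ℝ) - (i : ℝ))| <
            κ * (1 + |(i : ℝ) - (j : ℝ)|)}) ⊆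
      ⋃ m ∈ Finset.Icc (-(N:ℤ)) (N:ℤ), Am m := by
    apply Set.iUnion₂_subset
    intro i j ρ hρ
    obtain ⟨hρD, hρlt⟩ := hρ
    set m : ℤ := ((j:ℕ):ℤ) - ((i:ℕ):ℤ) with hm
    have e1 : ((j : ℝ) - (i : ℝ)) = (m:ℝ) := by rw [hm]; push_cast; ring
    have e2 : |(i : ℝ) - (j : ℝ)| = |(m:ℝ)| := by
      rw [hm]; push_cast; rw [abs_sub_comm]
    rw [e1, e2] at hρlt
    have hρ' : ρ ∈ Am m := ⟨hρD, hρlt⟩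
    have h1 : b₁ * |(m:ℝ)| ≤ |(∑ b, (k b : ℝ) * ω ρ b) + b₁ * (m:ℝ)|
        + |∑ b, (k b : ℝ) * ω ρ b| := by
      calc b₁ * |(m:ℝ)| = |b₁ * (m:ℝ)| := by rw [abs_mul, abs_of_pos hb₁]
        _ = |((∑ b, (k b : ℝ) * ω ρ b) + b₁ * (m:ℝ)) - (∑ b, (k b : ℝ) * ω ρ b)| := by
            ring_nf
        _ ≤ _ := abs_sub _ _
    have h2 : κ * (1 + |(m:ℝ)|) ≤ (b₁/3) * (1 + |(m:ℝ)|) :=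
      mul_le_mul_of_nonneg_right hκ3.le (by positivity)
    have h4 : (2*b₁/3) * |(m:ℝ)| ≤ (b₁ + M) * K := by
      nlinarith [h1, hρlt, h2, hgbound ρ hρD,
        mul_le_mul_of_nonneg_left hK1 hb₁.le, abs_nonneg ((m:ℝ))]
    have heq : (2*b₁/3) * (A * K) = (b₁ + M) * K := by
      rw [hAdef]; field_simp
    have h3 : |(m:ℝ)| ≤ A * K :=
      le_of_mul_le_mul_left (by rw [heq]; exact h4) (by positivity)
    have habs : |(m:ℝ)| ≤ (N:ℝ) := h3.trans (Nat.le_ceil _)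
    have hmN : |m| ≤ (N:ℤ) := by exact_mod_cast habs
    have hmem : m ∈ Finset.Icc (-(N:ℤ)) (N:ℤ) :=
      Finset.mem_Icc.2 ⟨(abs_le.1 hmN).1, (abs_le.1 hmN).2⟩
    exact Set.mem_biUnion hmem hρ'
  have hAmle : ∀ m : ℤ, volume (Am m) ≤
      ENNReal.ofReal ((L^n * ((2*M)^(n-1) * 2 * ((n:ℝ)/K))) * (κ * (1 + |(m:ℝ)|))) := by
    intro m
    have hεpos : 0 < κ * (1 + |(m:ℝ)|) := by positivity
    have hpre := preimage_vol_le n L hL D ω hinj hlip (Am m)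
      {y : Fin n → ℝ | |(∑ b, (k b : ℝ) * y b) + b₁ * (m:ℝ)| < κ * (1 + |(m:ℝ)|) ∧
        ∀ b, |y b| ≤ M}
      (fun ρ hρ => hρ.1)
      (fun ρ hρ => ⟨hρ.2, fun b => by
        calc |ω ρ b| = ‖ω ρ b‖ := (Real.norm_eq_abs _).symm
          _ ≤ ‖ω ρ‖ := norm_le_pi_norm (ω ρ) b
          _ ≤ M := hbound ρ hρ.1⟩)
    refine hpre.trans ?_
    have hslab := slab_vol n hn M hM k hk (b₁ * (m:ℝ)) (κ * (1 + |(m:ℝ)|)) hεpos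
    rw [← hK] at hslab
    calc ENNReal.ofReal (L^n) * volume {y : Fin n → ℝ |
          |(∑ b, (k b : ℝ) * y b) + b₁ * (m:ℝ)| < κ * (1 + |(m:ℝ)|) ∧ ∀ b, |y b| ≤ M}
        ≤ ENNReal.ofReal (L^n) *
          ENNReal.ofReal ((2*M)^(n-1) * (2*(κ * (1 + |(m:ℝ)|))) * ((n : ℝ) / K)) := by
          exact mul_le_mul_right hslab _
      _ = ENNReal.ofReal ((L^n * ((2*M)^(n-1) * 2 * ((n:ℝ)/K))) * (κ * (1 + |(m:ℝ)|))) := by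
          rw [← ENNReal.ofReal_mul (by positivity)]
          congr 1
          ring
  have hcard : (Finset.Icc (-(N:ℤ)) (N:ℤ)).card = 2*N+1 := by
    rw [Int.card_Icc]
    omega
  have hNle : (N:ℝ) ≤ A*K + 1 := le_of_lt (Nat.ceil_lt_add_one (by positivity))
  have hAK : (3:ℝ)/2 ≤ A*K := by nlinarith [mul_le_mul_of_nonneg_left hK1 hApos.le]
  have hc₁ : (0:ℝ) ≤ L^n * ((2*M)^(n-1) * 2 * ((n:ℝ)/K)) := by positivity
  have hfinal : ∑ m ∈ Finset.Icc (-(N:ℤ)) (N:ℤ),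
      (L^n * ((2*M)^(n-1) * 2 * ((n:ℝ)/K))) * (κ * (1 + |(m:ℝ)|)) ≤
      24 * A^2 * (n:ℝ) * L^n * (2*M)^(n-1) * K * κ := by
    have hterm : ∀ m ∈ Finset.Icc (-(N:ℤ)) (N:ℤ),
        (L^n * ((2*M)^(n-1) * 2 * ((n:ℝ)/K))) * (κ * (1 + |(m:ℝ)|)) ≤
        (L^n * ((2*M)^(n-1) * 2 * ((n:ℝ)/K))) * (κ * (1 + (N:ℝ))) := by
      intro m hm
      rw [Finset.mem_Icc] at hm
      have : |(m:ℝ)| ≤ (N:ℝ) := by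
        rw [← Int.cast_abs]
        exact_mod_cast abs_le.2 hm
      have h1 : κ * (1 + |(m:ℝ)|) ≤ κ * (1 + (N:ℝ)) := by nlinarith
      exact mul_le_mul_of_nonneg_left h1 hc₁
    calc ∑ m ∈ Finset.Icc (-(N:ℤ)) (N:ℤ),
          (L^n * ((2*M)^(n-1) * 2 * ((n:ℝ)/K))) * (κ * (1 + |(m:ℝ)|))
        ≤ (Finset.Icc (-(N:ℤ)) (N:ℤ)).card •
          ((L^n * ((2*M)^(n-1) * 2 * ((n:ℝ)/K))) * (κ * (1 + (N:ℝ)))) :=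
          Finset.sum_le_card_nsmul _ _ _ hterm
      _ = ((2*N+1 : ℕ) : ℝ) *
          ((L^n * ((2*M)^(n-1) * 2 * ((n:ℝ)/K))) * (κ * (1 + (N:ℝ)))) := by
          rw [hcard, nsmul_eq_mul]
      _ ≤ (4*(A*K)) *
          ((L^n * ((2*M)^(n-1) * 2 * ((n:ℝ)/K))) * (κ * (3*(A*K)))) := by
          have hb1 : ((2*N+1 : ℕ) : ℝ) ≤ 4*(A*K) := by
            push_cast
            nlinarith [hNle, hAK]
          have hb2 : κ * (1 + (N:ℝ)) ≤ κ * (3*(A*K)) := by nlinarith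
          have hb3 : (0:ℝ) ≤ (L^n * ((2*M)^(n-1) * 2 * ((n:ℝ)/K))) * (κ * (1 + (N:ℝ))) := by
            positivity
          apply mul_le_mul hb1 (mul_le_mul_of_nonneg_left hb2 hc₁) (by positivity) (by positivity)
      _ = 12 * A^2 * K^2 * (L^n * ((2*M)^(n-1) * 2 * ((n:ℝ)/K))) * κ := by ring
      _ = 24 * A^2 * (n:ℝ) * L^n * (2*M)^(n-1) * K * κ := by
          field_simp
          ring
  calc volume (⋃ (i : ℕ+) (j : ℕ+),
        {ρ ∈ D | |(∑ b, (k b : ℝ) * ω ρ b) + b₁ * ((j : ℝ) - (i : ℝ))| <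
          κ * (1 + |(i : ℝ) - (j : ℝ)|)})
      ≤ volume (⋃ m ∈ Finset.Icc (-(N:ℤ)) (N:ℤ), Am m) := measure_mono hsub
    _ ≤ ∑ m ∈ Finset.Icc (-(N:ℤ)) (N:ℤ), volume (Am m) := measure_biUnion_finset_le _ _
    _ ≤ ∑ m ∈ Finset.Icc (-(N:ℤ)) (N:ℤ),
        ENNReal.ofReal ((L^n * ((2*M)^(n-1) * 2 * ((n:ℝ)/K))) * (κ * (1 + |(m:ℝ)|))) :=
        Finset.sum_le_sum (fun m _ => hAmle m)
    _ = ENNReal.ofReal (∑ m ∈ Finset.Icc (-(N:ℤ)) (N:ℤ),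
        (L^n * ((2*M)^(n-1) * 2 * ((n:ℝ)/K))) * (κ * (1 + |(m:ℝ)|))) :=
        (ENNReal.ofReal_sum_of_nonneg (fun m _ => by positivity)).symm
    _ ≤ ENNReal.ofReal (24 * A^2 * (n:ℝ) * L^n * (2*M)^(n-1) * K * κ) :=
        ENNReal.ofReal_le_ofReal hfinal
end

section
/- Let n be a positive integer, b₁ > 0, b₀ a real with b₁ + b₀ > 0, c* > 0, d* > 0, M_Ω > 0, β > 0, and let (d_j)_{j≥1} be a sequence of positive integers with d_j ≤ c*·j^{d*} for all j. Then there exists a constant C > 0, depending only на n, b₀, b₁, c*, d*, |ω|, M_Ω and β, with the following property. Let ω ∈ ℝⁿ, let Ω_{j,ι} (j ≥ 1, 1 ≤ ι ≤ d_j) be real numbers with |Ω_{j,ι} − (b₁·j + b₀)| ≤ M_Ω/j^β for all (j,ι), let N ≥ 1 be an integer, 0 < κ < 1, and let k ∈ ℤⁿ with |k| ≤ N. Let A = (A_i^j)_{i,j≥1} be an infinite block matrix with blocks A_i^j ∈ M_{d_i×d_j}(ℂ) and sup_{i,j} ‖A_i^j‖ < ∞, and suppose that for all (i,ι₁), (j,ι₂)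 with |k| + |i−j| ≠ 0 one has |⟨k,ω⟩ − Ω_{i,ι₁} + Ω_{j,ι₂}| ≥ κ·(1+|i−j|). Define the block matrix B(k) entrywise by B_{(i,ι₁)}^{(j,ι₂)}(k) = A_{(i,ι₁)}^{(j,ι₂)} / ( ⟨k,ω⟩ − Ω_{i,ι₁} + Ω_{j,ι₂} ) when |k| + |i−j| ≠ 0, and B_{(j,ι₁)}^{(j,ι₂)}(0) = 0. Then for all i, j ≥ 1, ‖B_i^j(k)‖ ≤ C · N^{d*/2} / ( κ^{d*/(2β)+1} · (1+|i−j|) ) · ‖A_i^j‖. -/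
/-!
On the block `(i, j)` write the divisor as `δ - a ι₁ + b ι₂`, where `δ = ⟨k,ω⟩ - b₁ i + b₁ j` is
constant on the block and `a, b` are the deviations of `Ω` from the linear law `b₁ j + b₀`.
Then `B` solves `δ B - diag(a) B + B diag(b) = A`. If `min i j` is so large that
`8 M_Ω ≤ κ (min i j)^β`, the deviations are at most `κ/8`, and this equation, read as a
perturbation of `δ B = A`, gives `‖B‖ ≤ 2‖A‖ / (κ(1+|i-j|))`. Otherwise `d_{min i j}` is at most
`c* (8 M_Ω / κ)^{d*/β}`, and the entrywise bound `|B_{ι₁ι₂}| ≤ |A_{ι₁ι₂}| / (κ(1+|i-j|))` passes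
to operator norms through the Frobenius norm at the cost of the square root of the smaller side
of the block.
-/

open scoped Matrix.Norms.L2Operator

namespace Matrix

variable {𝕜 m n : Type*} [RCLike 𝕜]

section

variable [Fintype m] [Fintype n] [DecidableEq n]

lemma l2_opNorm_le_sqrt_sum_sq (M : Matrix m n 𝕜) :
    ‖M‖ ≤ √(∑ i, ∑ j, ‖M i j‖ ^ 2) := by
  rw [l2_opNorm_def]
  refine ContinuousLinearMap.opNorm_le_bound _ (Real.sqrt_nonneg _) fun x => ?_
  rw [EuclideanSpace.norm_eq x, ← Real.sqrt_mul (by positivity), EuclideanSpace.norm_eq]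
  refine Real.sqrt_le_sqrt ?_
  rw [Finset.sum_mul]
  refine Finset.sum_le_sum fun i _ => ?_
  calc ‖(M *ᵥ x.ofLp) i‖ ^ 2 ≤ (∑ j, ‖M i j‖ * ‖x j‖) ^ 2 := by
        gcongr
        simpa only [mulVec, dotProduct, norm_mul] using norm_sum_le Finset.univ fun j => M i j * x j
    _ ≤ (∑ j, ‖M i j‖ ^ 2) * ∑ j, ‖x j‖ ^ 2 := Finset.sum_mul_sq_le_sq_mul_sq _ _ _

lemma sum_sq_norm_col_le_l2_opNorm_sq (M : Matrix m n 𝕜) (j : n) :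
    ∑ i, ‖M i j‖ ^ 2 ≤ ‖M‖ ^ 2 := by
  have h := M.l2_opNorm_mulVec (EuclideanSpace.single j 1)
  rw [PiLp.norm_single, norm_one, mul_one] at h
  have hcol : M *ᵥ (EuclideanSpace.single j (1 : 𝕜)).ofLp = fun i => M i j := by
    ext i; simp [EuclideanSpace.single, mulVec_single]
  rw [hcol, EuclideanSpace.norm_eq] at h
  exact (Real.sqrt_le_left (norm_nonneg M)).mp h

lemma sum_sq_norm_le_card_mul_l2_opNorm_sq (M : Matrix m n 𝕜) :
    ∑ i, ∑ j, ‖M i j‖ ^ 2 ≤ Fintype.card n * ‖M‖ ^ 2 := by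
  rw [Finset.sum_comm]
  simpa using Finset.sum_le_sum fun j (_ : j ∈ Finset.univ) => M.sum_sq_norm_col_le_l2_opNorm_sq j

lemma sum_sq_norm_le_min_card_mul_l2_opNorm_sq [DecidableEq m] (M : Matrix m n 𝕜) :
    ∑ i, ∑ j, ‖M i j‖ ^ 2 ≤ min (Fintype.card m : ℝ) (Fintype.card n) * ‖M‖ ^ 2 := by
  rw [min_mul_of_nonneg _ _ (sq_nonneg _)]
  refine le_min ?_ M.sum_sq_norm_le_card_mul_l2_opNorm_sq
  have h := Mᴴ.sum_sq_norm_le_card_mul_l2_opNorm_sq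
  rw [l2_opNorm_conjTranspose, Finset.sum_comm] at h
  simpa using h

lemma l2_opNorm_le_of_norm_apply_le [DecidableEq m] {A B : Matrix m n 𝕜} {c : ℝ} (hc : 0 ≤ c)
    (h : ∀ i j, ‖B i j‖ ≤ c * ‖A i j‖) :
    ‖B‖ ≤ c * √(min (Fintype.card m : ℝ) (Fintype.card n)) * ‖A‖ := by
  refine B.l2_opNorm_le_sqrt_sum_sq.trans ?_
  rw [mul_assoc, ← Real.sqrt_sq hc, ← Real.sqrt_sq (norm_nonneg A), ← Real.sqrt_mul',
    ← Real.sqrt_mul (sq_nonneg c)]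
  gcongr
  calc ∑ i, ∑ j, ‖B i j‖ ^ 2 ≤ ∑ i, ∑ j, c ^ 2 * ‖A i j‖ ^ 2 := by
        gcongr with i _ j _
        simpa [mul_pow] using pow_le_pow_left₀ (norm_nonneg _) (h i j) 2
    _ ≤ c ^ 2 * (min (Fintype.card m : ℝ) (Fintype.card n) * ‖A‖ ^ 2) := by
        simp only [← Finset.mul_sum]
        gcongr
        exact A.sum_sq_norm_le_min_card_mul_l2_opNorm_sq
  all_goals positivity

end

/-- The entrywise solution of the homological equation
`δ • X - diagonal a * X + X * diagonal b = A`. -/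
def homologicalSolution (A : Matrix m n 𝕜) (δ : 𝕜) (a : m → 𝕜) (b : n → 𝕜) : Matrix m n 𝕜 :=
  of fun i j => A i j / (δ - a i + b j)

variable {A : Matrix m n 𝕜} {δ : 𝕜} {a : m → 𝕜} {b : n → 𝕜}

lemma norm_apply_homologicalSolution_le {ρ : ℝ} (hρ : 0 < ρ) (hsd : ∀ i j, ρ ≤ ‖δ - a i + b j‖)
    (i : m) (j : n) : ‖homologicalSolution A δ a b i j‖ ≤ ρ⁻¹ * ‖A i j‖ := by
  rw [homologicalSolution, of_apply, norm_div, div_eq_inv_mul]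
  gcongr
  exact hsd i j

section

variable [Fintype m] [Fintype n] [DecidableEq m] [DecidableEq n]

lemma smul_homologicalSolution (hne : ∀ i j, δ - a i + b j ≠ 0) :
    δ • homologicalSolution A δ a b =
      A + diagonal a * homologicalSolution A δ a b - homologicalSolution A δ a b * diagonal b := by
  ext i j
  simp only [homologicalSolution, smul_apply, add_apply, sub_apply, diagonal_mul, mul_diagonal,
    of_apply, smul_eq_mul]
  field_simp [hne i j]
  ring

lemma sub_two_mul_mul_norm_homologicalSolution_le {ε : ℝ} (hne : ∀ i j, δ - a i + b j ≠ 0)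
    (ha : ‖a‖ ≤ ε) (hb : ‖b‖ ≤ ε) : (‖δ‖ - 2 * ε) * ‖homologicalSolution A δ a b‖ ≤ ‖A‖ := by
  set X := homologicalSolution A δ a b
  have hDa : ‖diagonal a * X‖ ≤ ε * ‖X‖ := by
    grw [l2_opNorm_mul, l2_opNorm_diagonal, ha]
  have hDb : ‖X * diagonal b‖ ≤ ε * ‖X‖ := by
    grw [l2_opNorm_mul, l2_opNorm_diagonal, hb, mul_comm]
  have hδX : ‖δ‖ * ‖X‖ ≤ ‖A‖ + ‖diagonal a * X‖ + ‖X * diagonal b‖ := by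
    rw [← norm_smul, smul_homologicalSolution hne]
    exact (norm_sub_le _ _).trans (by grw [norm_add_le])
  linarith

lemma norm_homologicalSolution_le_of_norm_shift_le [Nonempty m] [Nonempty n] {ρ : ℝ} (hρ : 0 < ρ)
    (hsd : ∀ i j, ρ ≤ ‖δ - a i + b j‖) (ha : ‖a‖ ≤ ρ / 8) (hb : ‖b‖ ≤ ρ / 8) :
    ‖homologicalSolution A δ a b‖ ≤ 2 / ρ * ‖A‖ := by
  obtain ⟨i⟩ := ‹Nonempty m›
  obtain ⟨j⟩ := ‹Nonempty n›
  have hne : ∀ i j, δ - a i + b j ≠ 0 := fun i j h => by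
    have := hsd i j
    rw [h, norm_zero] at this
    linarith
  have hδ : ρ - ρ / 4 ≤ ‖δ‖ := by
    have hsplit : δ - a i + b j = δ - (a i - b j) := by ring
    linarith [hsplit ▸ hsd i j, norm_sub_le δ (a i - b j), norm_sub_le (a i) (b j),
      norm_le_pi_norm a i, norm_le_pi_norm b j]
  have := sub_two_mul_mul_norm_homologicalSolution_le (A := A) hne ha hb
  rw [div_mul_eq_mul_div, le_div_iff₀ hρ]
  nlinarith [norm_nonneg (homologicalSolution A δ a b)]

lemma norm_homologicalSolution_le_sqrt_min_card {ρ : ℝ} (hρ : 0 < ρ)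
    (hsd : ∀ i j, ρ ≤ ‖δ - a i + b j‖) :
    ‖homologicalSolution A δ a b‖ ≤
      ρ⁻¹ * √(min (Fintype.card m : ℝ) (Fintype.card n)) * ‖A‖ :=
  l2_opNorm_le_of_norm_apply_le (inv_nonneg.2 hρ.le) (norm_apply_homologicalSolution_le hρ hsd)

lemma norm_homologicalSolution_le [Nonempty m] [Nonempty n] {ε ρ K : ℝ} (hρ : 0 < ρ)
    (hερ : 8 * ε ≤ ρ) (hsd : ∀ i j, ρ ≤ ‖δ - a i + b j‖) (hK : 2 ≤ K)
    (h : ‖a‖ ≤ ε ∧ ‖b‖ ≤ ε ∨ √(min (Fintype.card m : ℝ) (Fintype.card n)) ≤ K) :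
    ‖homologicalSolution A δ a b‖ ≤ K / ρ * ‖A‖ := by
  rcases h with ⟨ha, hb⟩ | hcard
  · refine (norm_homologicalSolution_le_of_norm_shift_le hρ hsd ?_ ?_).trans (by gcongr) <;>
      linarith
  · calc _ ≤ ρ⁻¹ * √(min (Fintype.card m : ℝ) (Fintype.card n)) * ‖A‖ :=
          norm_homologicalSolution_le_sqrt_min_card hρ hsd
      _ ≤ ρ⁻¹ * K * ‖A‖ := by gcongr
      _ = K / ρ * ‖A‖ := by rw [inv_mul_eq_div]

end

end Matrix

lemma pi_norm_ofReal_le {ι : Type*} [Fintype ι] {v : ι → ℝ} {r : ℝ} (hr : 0 ≤ r)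
    (h : ∀ i, |v i| ≤ r) : ‖fun i => (v i : ℂ)‖ ≤ r :=
  (pi_norm_le_iff_of_nonneg hr).2 fun i => by rw [Complex.norm_real, Real.norm_eq_abs]; exact h i

open Real in
lemma sqrt_le_sqrt_mul_rpow_of_le_mul_rpow {D c x y p β : ℝ} (hc : 0 ≤ c) (hx : 0 ≤ x)
    (hp : 0 ≤ p) (hβ : 0 < β) (hD : D ≤ c * x ^ p) (hxy : x ^ β ≤ y) :
    √D ≤ √c * y ^ (p / (2 * β)) := by
  have hy : 0 ≤ y := (rpow_nonneg hx β).trans hxy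
  have hxp : x ^ p ≤ y ^ (p / β) := calc
    x ^ p = (x ^ β) ^ (p / β) := by rw [← rpow_mul hx, mul_div_cancel₀ _ hβ.ne']
    _ ≤ y ^ (p / β) := by gcongr
  calc √D ≤ √(c * y ^ (p / β)) := sqrt_le_sqrt (hD.trans (by gcongr))
    _ = √c * y ^ (p / (2 * β)) := by
      rw [sqrt_mul hc, sqrt_eq_rpow (y ^ _), ← rpow_mul hy]
      ring_nf

open Real in
lemma forall_abs_sub_le_or_sqrt_min_le {d : ℕ+ → ℕ+} {f : ℕ+ → ℝ} {Ω : ∀ j, Fin (d j) → ℝ}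
    {c p M β κ : ℝ} (hc : 0 ≤ c) (hp : 0 ≤ p) (hM : 0 ≤ M) (hβ : 0 < β) (hκ : 0 < κ)
    (hd : ∀ j : ℕ+, (d j : ℝ) ≤ c * (j : ℝ) ^ p)
    (hΩ : ∀ j ι, |Ω j ι - f j| ≤ M / (j : ℝ) ^ β) (i j : ℕ+) :
    ((∀ ι, |Ω i ι - f i| ≤ κ / 8) ∧ ∀ ι, |Ω j ι - f j| ≤ κ / 8) ∨
      √(min (d i : ℝ) (d j)) ≤ √c * (8 * M) ^ (p / (2 * β)) / κ ^ (p / (2 * β)) := by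
  set l := min i j
  have hl : (1 : ℝ) ≤ l := by exact_mod_cast l.pos
  by_cases hlarge : 8 * M ≤ κ * (l : ℝ) ^ β
  · have hsmall : ∀ j', l ≤ j' → ∀ ι, |Ω j' ι - f j'| ≤ κ / 8 := fun j' hj' ι => calc
      _ ≤ M / (j' : ℝ) ^ β := hΩ j' ι
      _ ≤ M / (l : ℝ) ^ β := by gcongr; exact_mod_cast hj'
      _ ≤ κ / 8 := by rw [div_le_iff₀ (by positivity)]; linarith
    exact Or.inl ⟨hsmall i (min_le_left i j), hsmall j (min_le_right i j)⟩
  · have hdl : min (d i : ℝ) (d j) ≤ d l := by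
      rcases min_choice i j with h | h <;> simp [l, h]
    right
    calc √(min (d i : ℝ) (d j)) ≤ √(d l : ℝ) := sqrt_le_sqrt hdl
      _ ≤ √c * (8 * M / κ) ^ (p / (2 * β)) :=
        sqrt_le_sqrt_mul_rpow_of_le_mul_rpow hc (by positivity) hp hβ (hd l)
          (by rw [le_div_iff₀ hκ]; linarith)
      _ = _ := by rw [div_rpow (by positivity) hκ.le, mul_div_assoc]

theorem small_divisor_block_bound_general (n : ℕ)
    (b₁ b₀ cstar dstar MΩ β Mω : ℝ)
    (hc : 0 < cstar) (hd : 0 < dstar)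
    (hMΩ : 0 < MΩ) (hβ : 0 < β)
    (d : ℕ+ → ℕ+) (hdj : ∀ j : ℕ+, (d j : ℝ) ≤ cstar * (j : ℝ) ^ dstar) :
    ∃ C > (0 : ℝ),
      ∀ ω : Fin n → ℝ, ‖ω‖ ≤ Mω →
      ∀ Ω : ∀ j : ℕ+, Fin (d j) → ℝ,
        (∀ (j : ℕ+) (ι : Fin (d j)), |Ω j ι - (b₁ * (j : ℝ) + b₀)| ≤ MΩ / (j : ℝ) ^ β) →
      ∀ N : ℕ, 1 ≤ N → ∀ κ : ℝ, 0 < κ → κ < 1 →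
      ∀ k : Fin n → ℤ, (∑ b, |(k b : ℝ)|) ≤ N →
      ∀ A : ∀ i j : ℕ+, Matrix (Fin (d i)) (Fin (d j)) ℂ,
        (∃ MA : ℝ, ∀ i j : ℕ+, ‖A i j‖ ≤ MA) →
        (∀ (i j : ℕ+) (ι₁ : Fin (d i)) (ι₂ : Fin (d j)),
          (∑ b, |(k b : ℝ)|) + |(i : ℝ) - (j : ℝ)| ≠ 0 →
          κ * (1 + |(i : ℝ) - (j : ℝ)|) ≤
            |(∑ b, (k b : ℝ) * ω b) - Ω i ι₁ + Ω j ι₂|) →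
      ∀ i j : ℕ+,
        ‖(Matrix.of fun (ι₁ : Fin (d i)) (ι₂ : Fin (d j)) =>
            if (∑ b, |(k b : ℝ)|) + |(i : ℝ) - (j : ℝ)| = 0 then (0 : ℂ)
            else A i j ι₁ ι₂ /
              (((∑ b, (k b : ℝ) * ω b) - Ω i ι₁ + Ω j ι₂ : ℝ) : ℂ))‖ ≤
          C * (N : ℝ) ^ (dstar / 2) /
            (κ ^ (dstar / (2 * β) + 1) * (1 + |(i : ℝ) - (j : ℝ)|)) * ‖A i j‖ := by
  set C := 2 + √cstar * (8 * MΩ) ^ (dstar / (2 * β))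
  refine ⟨C, by positivity, fun ω _ Ω hΩ N hN κ hκ hκ1 k _ A _ hsd i j => ?_⟩
  by_cases hk : (∑ b, |(k b : ℝ)|) + |(i : ℝ) - (j : ℝ)| = 0
  · simp only [hk, if_true]
    exact (norm_eq_zero.2 rfl).trans_le (by positivity)
  set ρ := κ * (1 + |(i : ℝ) - (j : ℝ)|)
  set δ : ℂ := ((∑ b, (k b : ℝ) * ω b - b₁ * i + b₁ * j : ℝ) : ℂ)
  set a : Fin (d i) → ℂ := fun ι => ((Ω i ι - (b₁ * i + b₀) : ℝ) : ℂ)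
  set b : Fin (d j) → ℂ := fun ι => ((Ω j ι - (b₁ * j + b₀) : ℝ) : ℂ)
  have hentry : ∀ ι₁ ι₂, δ - a ι₁ + b ι₂ = ((∑ b, (k b : ℝ) * ω b - Ω i ι₁ + Ω j ι₂ : ℝ) : ℂ) := by
    intro ι₁ ι₂; simp only [δ, a, b]; push_cast; ring
  have hdivisor : ∀ ι₁ ι₂, ρ ≤ ‖δ - a ι₁ + b ι₂‖ := fun ι₁ ι₂ => by
    rw [hentry, Complex.norm_real, Real.norm_eq_abs]; exact hsd i j ι₁ ι₂ hk
  have hκρ : κ ≤ ρ := le_mul_of_one_le_right hκ.le (le_add_of_nonneg_right (abs_nonneg _))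
  have hκp : κ ^ (dstar / (2 * β)) ≤ 1 := Real.rpow_le_one hκ.le hκ1.le (by positivity)
  have hK : 2 ≤ C / κ ^ (dstar / (2 * β)) :=
    (le_add_of_nonneg_right (by positivity)).trans (le_div_self (by positivity) (by positivity) hκp)
  have hdich : ‖a‖ ≤ κ / 8 ∧ ‖b‖ ≤ κ / 8 ∨
      √(min (Fintype.card (Fin (d i)) : ℝ) (Fintype.card (Fin (d j)))) ≤
        C / κ ^ (dstar / (2 * β)) := by
    rcases forall_abs_sub_le_or_sqrt_min_le (f := fun j => b₁ * j + b₀) hc.le hd.le hMΩ.le hβ hκ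
      hdj hΩ i j with ⟨hi, hj⟩ | hcard
    · exact Or.inl ⟨pi_norm_ofReal_le (by positivity) hi, pi_norm_ofReal_le (by positivity) hj⟩
    · exact Or.inr (by simpa using hcard.trans (by gcongr; exact le_add_of_nonneg_left zero_le_two))
  calc _ = ‖(A i j).homologicalSolution δ a b‖ := by
        congr 1; ext ι₁ ι₂; simp [hk, Matrix.homologicalSolution, hentry]
    _ ≤ C / κ ^ (dstar / (2 * β)) / ρ * ‖A i j‖ :=
        Matrix.norm_homologicalSolution_le (by positivity) (by linarith) hdivisor hK hdich
    _ ≤ _ := by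
      rw [Real.rpow_add hκ, Real.rpow_one, mul_assoc, div_div]
      gcongr
      exact le_mul_of_one_le_right (by positivity)
        (Real.one_le_rpow (by exact_mod_cast hN) (by positivity))

/-- (Small–divisor lemma.)  Let `n ≥ 1`, `b₁ > 0`, `b₁ + b₀ > 0`, `c* > 0`, `d* > 0`,
`M_Ω > 0`, `β > 0`, and let `(d_j)` be positive integers with `d_j ≤ c*·j^{d*}`.  Then there
is a constant `C > 0` (depending only on `n, b₀, b₁, c*, d*, M_Ω, β` and a bound `M_ω` on
`|ω|`) such that: for every `ω ∈ ℝⁿ` with `|ω| ≤ M_ω`, every family `Ω_{j,ι}` with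
`|Ω_{j,ι} − (b₁j+b₀)| ≤ M_Ω/j^β`, every `N ≥ 1`, `0 < κ < 1`, `k ∈ ℤⁿ` with `|k|₁ ≤ N`, and
every block matrix `A` (blocks `A_i^j ∈ M_{d_i×d_j}(ℂ)` with the `ℓ²`-operator norm) with
`sup_{i,j}‖A_i^j‖ < ∞`, if the small-divisor estimate
`|⟨k,ω⟩ − Ω_{i,ι₁} + Ω_{j,ι₂}| ≥ κ(1+|i−j|)` holds whenever `|k|₁ + |i−j| ≠ 0`, then the
block matrix `B(k)` with entries `B_{(i,ι₁)}^{(j,ι₂)} = A_{(i,ι₁)}^{(j,ι₂)} /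
(⟨k,ω⟩ − Ω_{i,ι₁} + Ω_{j,ι₂})` for `|k|₁+|i−j| ≠ 0` and `B_{(j,ι₁)}^{(j,ι₂)}(0) = 0`
satisfies `‖B_i^j‖ ≤ C·N^{d*/2}/(κ^{d*/(2β)+1}(1+|i−j|))·‖A_i^j‖` for all `i, j`. -/
theorem small_divisor_block_bound (n : ℕ) (hn : 0 < n)
    (b₁ b₀ cstar dstar MΩ β Mω : ℝ)
    (hb₁ : 0 < b₁) (hb₀ : 0 < b₁ + b₀) (hc : 0 < cstar) (hd : 0 < dstar)
    (hMΩ : 0 < MΩ) (hβ : 0 < β) (hMω : 0 ≤ Mω)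
    (d : ℕ+ → ℕ+) (hdj : ∀ j : ℕ+, (d j : ℝ) ≤ cstar * (j : ℝ) ^ dstar) :
    ∃ C > (0 : ℝ),
      ∀ ω : Fin n → ℝ, ‖ω‖ ≤ Mω →
      ∀ Ω : ∀ j : ℕ+, Fin (d j) → ℝ,
        (∀ (j : ℕ+) (ι : Fin (d j)), |Ω j ι - (b₁ * (j : ℝ) + b₀)| ≤ MΩ / (j : ℝ) ^ β) →
      ∀ N : ℕ, 1 ≤ N → ∀ κ : ℝ, 0 < κ → κ < 1 →
      ∀ k : Fin n → ℤ, (∑ b, |(k b : ℝ)|) ≤ N →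
      ∀ A : ∀ i j : ℕ+, Matrix (Fin (d i)) (Fin (d j)) ℂ,
        (∃ MA : ℝ, ∀ i j : ℕ+, ‖A i j‖ ≤ MA) →
        (∀ (i j : ℕ+) (ι₁ : Fin (d i)) (ι₂ : Fin (d j)),
          (∑ b, |(k b : ℝ)|) + |(i : ℝ) - (j : ℝ)| ≠ 0 →
          κ * (1 + |(i : ℝ) - (j : ℝ)|) ≤
            |(∑ b, (k b : ℝ) * ω b) - Ω i ι₁ + Ω j ι₂|) →
      ∀ i j : ℕ+,
        ‖(Matrix.of fun (ι₁ : Fin (d i)) (ι₂ : Fin (d j)) =>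
            if (∑ b, |(k b : ℝ)|) + |(i : ℝ) - (j : ℝ)| = 0 then (0 : ℂ)
            else A i j ι₁ ι₂ /
              (((∑ b, (k b : ℝ) * ω b) - Ω i ι₁ + Ω j ι₂ : ℝ) : ℂ))‖ ≤
          C * (N : ℝ) ^ (dstar / 2) /
            (κ ^ (dstar / (2 * β) + 1) * (1 + |(i : ℝ) - (j : ℝ)|)) * ‖A i j‖ :=
  small_divisor_block_bound_general n b₁ b₀ cstar dstar MΩ β Mω hc hd hMΩ hβ d hdj
end
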